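/- arXiv:1509.05928 — 4 statements merged into one kernel-verified Lean document; each statement's English description precedes it below -/
import Mathlib

section
/- Let n ≥ 1, α > 0, r ∈ ℝ, and let g ∈ L²(ℝⁿ) be measurable with P_r(g)₋ > 0. Then there exists a constant C₁ > 0 such that for all t ≥ 0: ∫_{ℝⁿ} e^{−2t|ξ|^{2α}} |g(ξ)|² dξ ≥ C₁ (1+t)^{−(r+n/2)/α}. -/
/-!
Pick `0 < c < P_r(g)₋`, so that `∫_{|ξ|≤ρ} |g|² ≥ c ρ^{2r+n}` for all `0 < ρ ≤ δ`. At time `t`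
take `ρ = δ (1+t)^{-1/(2α)}`: on the ball of radius `ρ` one has `t|ξ|^{2α} ≤ 1`, so the weight
`e^{-2t|ξ|^{2α}}` is at least `e^{-2}`, and `E_α(t) ≥ e^{-2} c ρ^{2r+n}`, which is a constant
times `(1+t)^{-(r+n/2)/α}`.
-/

open MeasureTheory Filter Topology
open scoped ENNReal NNReal

noncomputable section

/-- The quantity `ρ^{-(2r+n)} ∫_{|ξ|≤ρ} |g(ξ)|² dξ`, valued in `[0,∞]`. -/
def decayFun (n : ℕ) (g : EuclideanSpace ℝ (Fin n) → ℂ) (r ρ : ℝ) : ℝ≥0∞ :=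
  ENNReal.ofReal (ρ ^ (-(2 * r + (n : ℝ)))) *
    ∫⁻ ξ in {ξ : EuclideanSpace ℝ (Fin n) | ‖ξ‖ ≤ ρ}, ENNReal.ofReal (‖g ξ‖ ^ 2)

/-- Lower decay indicator `P_r(g)₋`. -/
def Pminus (n : ℕ) (g : EuclideanSpace ℝ (Fin n) → ℂ) (r : ℝ) : ℝ≥0∞ :=
  liminf (fun ρ : ℝ => decayFun n g r ρ) (𝓝[>] (0 : ℝ))

/-- Upper decay indicator `P_r(g)₊`. -/
def Pplus (n : ℕ) (g : EuclideanSpace ℝ (Fin n) → ℂ) (r : ℝ) : ℝ≥0∞ :=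
  limsup (fun ρ : ℝ => decayFun n g r ρ) (𝓝[>] (0 : ℝ))

/-- `E_α(t) = ∫_{ℝⁿ} e^{−2t|ξ|^{2α}} |g(ξ)|² dξ`, valued in `[0,∞]`. -/
def Ealpha (n : ℕ) (g : EuclideanSpace ℝ (Fin n) → ℂ) (α t : ℝ) : ℝ≥0∞ :=
  ∫⁻ ξ : EuclideanSpace ℝ (Fin n),
    ENNReal.ofReal (Real.exp (-(2 * t) * ‖ξ‖ ^ (2 * α)) * ‖g ξ‖ ^ 2)

lemma exists_lt_decayFun_of_lt_Pminus {n : ℕ} {g : EuclideanSpace ℝ (Fin n) → ℂ} {r : ℝ}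
    {c : ℝ≥0∞} (hc : c < Pminus n g r) :
    ∃ δ, 0 < δ ∧ δ ≤ 1 ∧ ∀ ρ, 0 < ρ → ρ ≤ δ → c < decayFun n g r ρ := by
  obtain ⟨u, hu, hsub⟩ := mem_nhdsGT_iff_exists_Ioc_subset.mp (eventually_lt_of_lt_liminf hc)
  exact ⟨min u 1, lt_min hu one_pos, min_le_right _ _,
    fun ρ hρ hρδ => hsub ⟨hρ, hρδ.trans (min_le_left _ _)⟩⟩

lemma mul_rpow_le_setLIntegral_of_le_decayFun {n : ℕ} {g : EuclideanSpace ℝ (Fin n) → ℂ}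
    {r ρ : ℝ} {c : ℝ≥0∞} (hρ : 0 < ρ) (hc : c ≤ decayFun n g r ρ) :
    c * ENNReal.ofReal (ρ ^ (2 * r + (n : ℝ))) ≤
      ∫⁻ ξ in {ξ : EuclideanSpace ℝ (Fin n) | ‖ξ‖ ≤ ρ}, ENNReal.ofReal (‖g ξ‖ ^ 2) := by
  have hcancel : ENNReal.ofReal (ρ ^ (-(2 * r + (n : ℝ)))) *
      ENNReal.ofReal (ρ ^ (2 * r + (n : ℝ))) = 1 := by
    rw [← ENNReal.ofReal_mul (Real.rpow_nonneg hρ.le _), ← Real.rpow_add hρ, neg_add_cancel,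
      Real.rpow_zero, ENNReal.ofReal_one]
  calc c * ENNReal.ofReal (ρ ^ (2 * r + (n : ℝ)))
      ≤ decayFun n g r ρ * ENNReal.ofReal (ρ ^ (2 * r + (n : ℝ))) := by gcongr
    _ = _ := by rw [decayFun, mul_right_comm, hcancel, one_mul]

lemma exp_neg_two_mul_setLIntegral_le_Ealpha {n : ℕ} {g : EuclideanSpace ℝ (Fin n) → ℂ}
    {α t ρ : ℝ} (hα : 0 ≤ α) (ht : 0 ≤ t) (htρ : t * ρ ^ (2 * α) ≤ 1) :
    ENNReal.ofReal (Real.exp (-2)) *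
        ∫⁻ ξ in {ξ : EuclideanSpace ℝ (Fin n) | ‖ξ‖ ≤ ρ}, ENNReal.ofReal (‖g ξ‖ ^ 2) ≤
      Ealpha n g α t := by
  have hball : MeasurableSet {ξ : EuclideanSpace ℝ (Fin n) | ‖ξ‖ ≤ ρ} :=
    measurableSet_le measurable_norm measurable_const
  rw [← lintegral_const_mul' _ _ ENNReal.ofReal_ne_top]
  refine (setLIntegral_mono' hball fun ξ hξ => ?_).trans (setLIntegral_le_lintegral _ _)
  rw [← ENNReal.ofReal_mul (Real.exp_nonneg _)]
  gcongr
  have hξρ : t * ‖ξ‖ ^ (2 * α) ≤ t * ρ ^ (2 * α) := by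
    gcongr
    exact hξ
  linarith

/-- The frequency radius `δ (1+t)^{-1/(2α)}` below which `e^{-2t|ξ|^{2α}}` stays of order one. -/
def frequencyScale (δ α t : ℝ) : ℝ := δ * (1 + t) ^ (-(1 / (2 * α)))

section frequencyScale

variable {δ α t : ℝ}

lemma frequencyScale_pos (hδ : 0 < δ) (ht : 0 ≤ t) : 0 < frequencyScale δ α t :=
  mul_pos hδ (Real.rpow_pos_of_pos (by linarith) _)

lemma frequencyScale_le (hδ : 0 ≤ δ) (hα : 0 < α) (ht : 0 ≤ t) :
    frequencyScale δ α t ≤ δ :=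
  mul_le_of_le_one_right hδ
    (Real.rpow_le_one_of_one_le_of_nonpos (by linarith) (by simp only [neg_nonpos]; positivity))

lemma frequencyScale_rpow (hδ : 0 ≤ δ) (ht : 0 ≤ t) (p : ℝ) :
    frequencyScale δ α t ^ p = δ ^ p * (1 + t) ^ (-p / (2 * α)) := by
  rw [frequencyScale, Real.mul_rpow hδ (Real.rpow_nonneg (by linarith) _),
    ← Real.rpow_mul (by linarith)]
  congr 2
  ring

lemma mul_frequencyScale_rpow_le_one (hδ : 0 ≤ δ) (hδ₁ : δ ≤ 1) (hα : 0 < α) (ht : 0 ≤ t) :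
    t * frequencyScale δ α t ^ (2 * α) ≤ 1 := by
  have hδα : δ ^ (2 * α) ≤ 1 := Real.rpow_le_one hδ hδ₁ (by positivity)
  rw [frequencyScale_rpow hδ ht, neg_div, div_self (by positivity), Real.rpow_neg_one]
  calc t * (δ ^ (2 * α) * (1 + t)⁻¹) ≤ t * (1 + t)⁻¹ := by
        gcongr
        exact mul_le_of_le_one_left (by positivity) hδα
    _ ≤ 1 := by
        rw [← div_eq_mul_inv, div_le_one (by linarith)]
        linarith

end frequencyScale

theorem stmt3_general (n : ℕ) (α : ℝ) (hα : 0 < α) (r : ℝ)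
    (g : EuclideanSpace ℝ (Fin n) → ℂ)
    (hPm : 0 < Pminus n g r) :
    ∃ C₁ : ℝ, 0 < C₁ ∧ ∀ t : ℝ, 0 ≤ t →
      ENNReal.ofReal (C₁ * (1 + t) ^ (-(r + (n : ℝ) / 2) / α)) ≤ Ealpha n g α t := by
  obtain ⟨c, hc₀, hc⟩ := exists_between hPm
  have hc_top : c ≠ ⊤ := (hc.trans_le le_top).ne
  obtain ⟨δ, hδ₀, hδ₁, hδ⟩ := exists_lt_decayFun_of_lt_Pminus hc
  refine ⟨Real.exp (-2) * c.toReal * δ ^ (2 * r + (n : ℝ)),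
    mul_pos (mul_pos (Real.exp_pos _) (ENNReal.toReal_pos hc₀.ne' hc_top)) (by positivity),
    fun t ht => ?_⟩
  set ρ := frequencyScale δ α t
  have hρ : 0 < ρ := frequencyScale_pos hδ₀ ht
  have hdecay : c < decayFun n g r ρ := hδ ρ hρ (frequencyScale_le hδ₀.le hα ht)
  have hexponent : -(r + (n : ℝ) / 2) / α = -(2 * r + (n : ℝ)) / (2 * α) := by
    field_simp
  calc ENNReal.ofReal (Real.exp (-2) * c.toReal * δ ^ (2 * r + (n : ℝ)) *
          (1 + t) ^ (-(r + (n : ℝ) / 2) / α))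
      = ENNReal.ofReal (Real.exp (-2)) * (c * ENNReal.ofReal (ρ ^ (2 * r + (n : ℝ)))) := by
        rw [frequencyScale_rpow hδ₀.le ht, hexponent, mul_assoc, mul_assoc,
          ENNReal.ofReal_mul (Real.exp_nonneg _), ENNReal.ofReal_mul ENNReal.toReal_nonneg,
          ENNReal.ofReal_toReal hc_top]
    _ ≤ ENNReal.ofReal (Real.exp (-2)) *
          ∫⁻ ξ in {ξ : EuclideanSpace ℝ (Fin n) | ‖ξ‖ ≤ ρ}, ENNReal.ofReal (‖g ξ‖ ^ 2) := by
        gcongr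
        exact mul_rpow_le_setLIntegral_of_le_decayFun hρ hdecay.le
    _ ≤ Ealpha n g α t := exp_neg_two_mul_setLIntegral_le_Ealpha hα.le ht
        (mul_frequencyScale_rpow_le_one hδ₀.le hδ₁ hα ht)

theorem stmt3 (n : ℕ) (hn : 1 ≤ n) (α : ℝ) (hα : 0 < α) (r : ℝ)
    (g : EuclideanSpace ℝ (Fin n) → ℂ)
    (hg_meas : Measurable g) (hg : MemLp g 2 (volume : Measure (EuclideanSpace ℝ (Fin n))))
    (hPm : 0 < Pminus n g r) :
    ∃ C₁ : ℝ, 0 < C₁ ∧ ∀ t : ℝ, 0 ≤ t →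
      ENNReal.ofReal (C₁ * (1 + t) ^ (-(r + (n : ℝ) / 2) / α)) ≤ Ealpha n g α t :=
  stmt3_general n α hα r g hPm
end
end

section
/- Let n ≥ 1, α > 0, r ∈ ℝ, and let g ∈ L²(ℝⁿ) be measurable with P_r(g)₊ < ∞. Then there exists a constant C₂ > 0 such that for all t ≥ 0: ∫_{ℝⁿ} e^{−2t|ξ|^{2α}} |g(ξ)|² dξ ≤ C₂ (1+t)^{−(r+n/2)/α}. -/
open MeasureTheory Filter Topology
open scoped ENNReal NNReal

noncomputable section

/-!
Write `ν = |g|² dξ`. Near `0` the hypothesis `P_r(g)₊ < ∞` gives `ν(B_s) ≤ B s^e` with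
`e = 2r + n`, and `ν` is finite since `g ∈ L²`, so for `e > 0` we get `ν(B_s) ≤ K s^e` for all
`s > 0`. Split `ℝⁿ` into the ball of radius `ρ = t^(-1/(2α))` and the dyadic shells
`2^k ρ ≤ |ξ| ≤ 2^(k+1) ρ`: after this rescaling the multiplier on the `k`-th shell is at most
`exp (-2^(2αk))`, independently of `t`, and `exp (-x) ≤ N! x^(-N)` makes the series of shell
contributions converge. Hence `E_α(t) ≲ t^(-e/(2α))`; for small `t`, and for all `t` when
`e ≤ 0`, the trivial bound `E_α(t) ≤ ‖g‖₂²` suffices.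
-/

open Metric

lemma Real.exp_neg_mul_pow_le_factorial {x : ℝ} (hx : 0 ≤ x) (N : ℕ) :
    Real.exp (-x) * x ^ N ≤ N.factorial := by
  rw [Real.exp_neg, inv_mul_eq_div, div_le_iff₀ (Real.exp_pos x), ← div_le_iff₀' (by positivity)]
  exact Real.pow_div_factorial_le_exp x hx N

lemma ENNReal.ofReal_rpow_mul_ofReal_rpow_neg {s : ℝ} (hs : 0 < s) (e : ℝ) :
    ENNReal.ofReal (s ^ e) * ENNReal.ofReal (s ^ (-e)) = 1 := by
  rw [← ENNReal.ofReal_mul (by positivity), ← Real.rpow_add hs, add_neg_cancel, Real.rpow_zero,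
    ENNReal.ofReal_one]

lemma exists_measure_closedBall_le_mul_rpow {X : Type*} [PseudoMetricSpace X] [MeasurableSpace X]
    (ν : Measure X) [IsFiniteMeasure ν] (x : X) {e : ℝ} (he : 0 ≤ e)
    (h : limsup (fun ρ : ℝ => ENNReal.ofReal (ρ ^ (-e)) * ν (closedBall x ρ)) (𝓝[>] 0) < ⊤) :
    ∃ K : ℝ≥0∞, K ≠ ⊤ ∧ ∀ s, 0 < s → ν (closedBall x s) ≤ K * ENNReal.ofReal (s ^ e) := by
  obtain ⟨B, hlt, hB⟩ := exists_between h
  obtain ⟨ρ₀, hρ₀, hsmall⟩ := mem_nhdsGT_iff_exists_Ioo_subset.mp (eventually_lt_of_limsup_lt hlt)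
  refine ⟨B + ν Set.univ * ENNReal.ofReal (ρ₀ ^ (-e)), by finiteness, fun s hs => ?_⟩
  rcases lt_or_ge s ρ₀ with hs₀ | hs₀
  · calc ν (closedBall x s)
        = ENNReal.ofReal (s ^ e) * (ENNReal.ofReal (s ^ (-e)) * ν (closedBall x s)) := by
          rw [← mul_assoc, ENNReal.ofReal_rpow_mul_ofReal_rpow_neg hs, one_mul]
      _ ≤ ENNReal.ofReal (s ^ e) * B := by gcongr; exact (hsmall ⟨hs, hs₀⟩).le
      _ ≤ _ := by rw [mul_comm]; gcongr; exact le_self_add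
  · calc ν (closedBall x s)
        ≤ ν Set.univ * (ENNReal.ofReal (ρ₀ ^ (-e)) * ENNReal.ofReal (ρ₀ ^ e)) := by
          rw [mul_comm (ENNReal.ofReal _), ENNReal.ofReal_rpow_mul_ofReal_rpow_neg hρ₀, mul_one]
          exact measure_mono (Set.subset_univ _)
      _ ≤ ν Set.univ * ENNReal.ofReal (ρ₀ ^ (-e)) * ENNReal.ofReal (s ^ e) := by
          rw [← mul_assoc]; gcongr; exact le_of_lt hρ₀
      _ ≤ _ := by gcongr; exact le_add_self

/-- After rescaling to `ρ = t ^ (-1/p)`, the `k`-th dyadic shell contributes at most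
`K * ρ ^ e` times the `k`-th term of this series. -/
def dyadicExpSum (p e : ℝ) : ℝ :=
  ∑' k : ℕ, Real.exp (-((2 : ℝ) ^ p) ^ k) * ((2 : ℝ) ^ (k + 1)) ^ e

lemma summable_exp_neg_rpow_pow_mul_rpow {p : ℝ} (hp : 0 < p) (e : ℝ) :
    Summable fun k : ℕ => Real.exp (-((2 : ℝ) ^ p) ^ k) * ((2 : ℝ) ^ (k + 1)) ^ e := by
  obtain ⟨N, hN⟩ := exists_nat_gt (e / p)
  set q := (2 : ℝ) ^ e / ((2 : ℝ) ^ p) ^ N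
  have hq : q < 1 := by
    rw [div_lt_one (by positivity), ← Real.rpow_natCast, ← Real.rpow_mul zero_le_two]
    exact Real.rpow_lt_rpow_of_exponent_lt one_lt_two (by rwa [div_lt_iff₀ hp, mul_comm] at hN)
  refine Summable.of_nonneg_of_le (fun k => by positivity) (fun k => ?_)
    ((summable_geometric_of_lt_one (by positivity) hq).mul_left (N.factorial * (2 : ℝ) ^ e))
  have hx : 0 < ((2 : ℝ) ^ p) ^ k := by positivity
  have hexp : Real.exp (-((2 : ℝ) ^ p) ^ k) ≤ N.factorial / (((2 : ℝ) ^ p) ^ N) ^ k := by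
    rw [le_div_iff₀ (by positivity), ← pow_mul, mul_comm N k, pow_mul]
    exact Real.exp_neg_mul_pow_le_factorial hx.le N
  calc Real.exp (-((2 : ℝ) ^ p) ^ k) * ((2 : ℝ) ^ (k + 1)) ^ e
      = Real.exp (-((2 : ℝ) ^ p) ^ k) * (2 ^ e * ((2 : ℝ) ^ e) ^ k) := by
        rw [← Real.rpow_pow_comm zero_le_two, pow_succ']
    _ ≤ N.factorial / (((2 : ℝ) ^ p) ^ N) ^ k * (2 ^ e * ((2 : ℝ) ^ e) ^ k) := by gcongr
    _ = N.factorial * 2 ^ e * q ^ k := by rw [div_pow]; field_simp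

section Dyadic

variable {E : Type*} [SeminormedAddCommGroup E] [MeasurableSpace E] [OpensMeasurableSpace E]

lemma lintegral_comp_norm_le_tsum_closedBall (ν : Measure E) {φ : ℝ → ℝ≥0∞}
    (hφ : AntitoneOn φ (Set.Ici 0)) {ρ : ℝ} (hρ : 0 < ρ) :
    ∫⁻ ξ, φ ‖ξ‖ ∂ν ≤ φ 0 * ν (closedBall 0 ρ) +
      ∑' k : ℕ, φ (2 ^ k * ρ) * ν (closedBall 0 (2 ^ (k + 1) * ρ)) := by
  have hpt : ∀ ξ : E, φ ‖ξ‖ ≤ (closedBall 0 ρ).indicator (fun _ => φ 0) ξ +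
      ∑' k : ℕ, (closedBall 0 (2 ^ (k + 1) * ρ)).indicator (fun _ => φ (2 ^ k * ρ)) ξ := by
    intro ξ
    rcases le_or_gt ‖ξ‖ ρ with hξ | hξ
    · have hmem : ξ ∈ closedBall (0 : E) ρ := mem_closedBall_zero_iff.mpr hξ
      rw [Set.indicator_of_mem hmem]
      exact (hφ (Set.mem_Ici.mpr le_rfl) (norm_nonneg ξ) (Set.mem_Ici.mpr (norm_nonneg ξ))).trans
        le_self_add
    · obtain ⟨k, hk, hk'⟩ := exists_nat_pow_near ((one_le_div hρ).mpr hξ.le) one_lt_two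
      have hmem : ξ ∈ closedBall (0 : E) (2 ^ (k + 1) * ρ) :=
        mem_closedBall_zero_iff.mpr ((div_le_iff₀ hρ).mp hk'.le)
      calc φ ‖ξ‖ ≤ φ (2 ^ k * ρ) :=
            hφ (by positivity : (0 : ℝ) ≤ 2 ^ k * ρ) (norm_nonneg ξ) ((le_div_iff₀ hρ).mp hk)
        _ = (closedBall 0 (2 ^ (k + 1) * ρ)).indicator (fun _ => φ (2 ^ k * ρ)) ξ :=
            (Set.indicator_of_mem hmem (fun _ => φ (2 ^ k * ρ))).symm
        _ ≤ _ := ENNReal.le_tsum k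
        _ ≤ _ := le_add_self
  calc ∫⁻ ξ, φ ‖ξ‖ ∂ν
      ≤ ∫⁻ ξ, (closedBall 0 ρ).indicator (fun _ => φ 0) ξ +
          ∑' k : ℕ, (closedBall 0 (2 ^ (k + 1) * ρ)).indicator (fun _ => φ (2 ^ k * ρ)) ξ ∂ν :=
        lintegral_mono hpt
    _ = _ := by
        have hmeas (c : ℝ≥0∞) (s : ℝ) : Measurable ((closedBall (0 : E) s).indicator fun _ => c) :=
          measurable_const.indicator measurableSet_closedBall
        rw [lintegral_add_left (hmeas _ _), lintegral_tsum fun _ => (hmeas _ _).aemeasurable]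
        simp only [lintegral_indicator_const measurableSet_closedBall]

lemma lintegral_exp_neg_mul_rpow_le (ν : Measure E) {K : ℝ≥0∞} {p e t : ℝ} (hp : 0 < p)
    (ht : 0 < t) (hν : ∀ s, 0 < s → ν (closedBall 0 s) ≤ K * ENNReal.ofReal (s ^ e)) :
    ∫⁻ ξ, ENNReal.ofReal (Real.exp (-t * ‖ξ‖ ^ p)) ∂ν ≤
      K * ENNReal.ofReal (1 + dyadicExpSum p e) * ENNReal.ofReal (t ^ (-(e / p))) := by
  set ρ := t ^ (-p⁻¹)
  have hρ : 0 < ρ := by positivity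
  have hρe : ρ ^ e = t ^ (-(e / p)) := by
    rw [← Real.rpow_mul ht.le]; ring_nf
  have hscale : ∀ k : ℕ, t * (2 ^ k * ρ) ^ p = ((2 : ℝ) ^ p) ^ k := by
    intro k
    rw [Real.mul_rpow (by positivity) hρ.le, ← Real.rpow_pow_comm zero_le_two,
      ← Real.rpow_mul ht.le, neg_mul, inv_mul_cancel₀ hp.ne', Real.rpow_neg_one,
      mul_left_comm, mul_inv_cancel₀ ht.ne', mul_one]
  have hφ : AntitoneOn (fun s : ℝ => ENNReal.ofReal (Real.exp (-t * s ^ p))) (Set.Ici 0) := by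
    intro a ha b _ hab
    refine ENNReal.ofReal_le_ofReal (Real.exp_le_exp.mpr ?_)
    rw [neg_mul, neg_mul, neg_le_neg_iff]
    exact mul_le_mul_of_nonneg_left (Real.rpow_le_rpow ha hab hp.le) ht.le
  have hshell : ∀ k : ℕ, ENNReal.ofReal (Real.exp (-t * (2 ^ k * ρ) ^ p)) *
      ν (closedBall 0 (2 ^ (k + 1) * ρ)) ≤
      ENNReal.ofReal (Real.exp (-((2 : ℝ) ^ p) ^ k) * ((2 : ℝ) ^ (k + 1)) ^ e) *
        (K * ENNReal.ofReal (ρ ^ e)) := by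
    intro k
    calc _ ≤ ENNReal.ofReal (Real.exp (-((2 : ℝ) ^ p) ^ k)) *
          (K * ENNReal.ofReal ((2 ^ (k + 1) * ρ) ^ e)) := by
          rw [neg_mul, hscale]; gcongr; exact hν _ (by positivity)
      _ = _ := by
          rw [Real.mul_rpow (by positivity) hρ.le, ENNReal.ofReal_mul (by positivity),
            ENNReal.ofReal_mul (Real.exp_pos _).le]
          ring
  calc ∫⁻ ξ, ENNReal.ofReal (Real.exp (-t * ‖ξ‖ ^ p)) ∂ν
      ≤ _ := lintegral_comp_norm_le_tsum_closedBall ν hφ hρ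
    _ ≤ K * ENNReal.ofReal (ρ ^ e) + ∑' k : ℕ,
          ENNReal.ofReal (Real.exp (-((2 : ℝ) ^ p) ^ k) * ((2 : ℝ) ^ (k + 1)) ^ e) *
            (K * ENNReal.ofReal (ρ ^ e)) := by
        refine add_le_add ?_ (ENNReal.tsum_le_tsum hshell)
        rw [Real.zero_rpow hp.ne', mul_zero, Real.exp_zero, ENNReal.ofReal_one, one_mul]
        exact hν ρ hρ
    _ = _ := by
        rw [dyadicExpSum, ENNReal.ofReal_add zero_le_one (tsum_nonneg fun k => by positivity),
          ENNReal.ofReal_one, ENNReal.ofReal_tsum_of_nonneg (fun k => by positivity)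
          (summable_exp_neg_rpow_pow_mul_rpow hp e), ENNReal.tsum_mul_right, ← hρe]
        ring

end Dyadic

lemma exists_le_ofReal_mul_one_add_rpow_neg {f : ℝ → ℝ≥0∞} {A D : ℝ≥0∞} {β : ℝ}
    (hA : A ≠ ⊤) (hD : D ≠ ⊤) (hβ : 0 ≤ β) (hfA : ∀ t, 0 ≤ t → f t ≤ A)
    (hfD : ∀ t, 0 < t → f t ≤ D * ENNReal.ofReal (t ^ (-β))) :
    ∃ C : ℝ, 0 < C ∧ ∀ t, 0 ≤ t → f t ≤ ENNReal.ofReal (C * (1 + t) ^ (-β)) := by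
  refine ⟨((A + D).toReal + 1) * 2 ^ β, by positivity, fun t ht => ?_⟩
  have hm : 0 < max 1 t := lt_max_of_lt_left one_pos
  have hm_le : max 1 t ^ (-β) ≤ 2 ^ β * (1 + t) ^ (-β) :=
    calc max 1 t ^ (-β) = 2 ^ β * (2 * max 1 t) ^ (-β) := by
          rw [Real.mul_rpow zero_le_two hm.le, ← mul_assoc, ← Real.rpow_add two_pos,
            add_neg_cancel, Real.rpow_zero, one_mul]
      _ ≤ 2 ^ β * (1 + t) ^ (-β) := by
          refine mul_le_mul_of_nonneg_left (Real.rpow_le_rpow_of_nonpos (by positivity) ?_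
            (neg_nonpos.mpr hβ)) (by positivity)
          linarith [le_max_left 1 t, le_max_right 1 t]
  calc f t ≤ (A + D) * ENNReal.ofReal (max 1 t ^ (-β)) := by
        rcases le_or_gt t 1 with h | h
        · rw [max_eq_left h, Real.one_rpow, ENNReal.ofReal_one, mul_one]
          exact (hfA t ht).trans le_self_add
        · rw [max_eq_right h.le]
          exact (hfD t (by linarith)).trans (by gcongr; exact le_add_self)
    _ = ENNReal.ofReal ((A + D).toReal * max 1 t ^ (-β)) := by
        rw [ENNReal.ofReal_mul ENNReal.toReal_nonneg, ENNReal.ofReal_toReal (by finiteness)]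
    _ ≤ ENNReal.ofReal (((A + D).toReal + 1) * 2 ^ β * (1 + t) ^ (-β)) := by
        rw [mul_assoc]
        gcongr
        linarith

lemma exists_le_ofReal_mul_one_add_rpow_neg_of_nonpos {f : ℝ → ℝ≥0∞} {A : ℝ≥0∞} {β : ℝ}
    (hA : A ≠ ⊤) (hβ : β ≤ 0) (hfA : ∀ t, 0 ≤ t → f t ≤ A) :
    ∃ C : ℝ, 0 < C ∧ ∀ t, 0 ≤ t → f t ≤ ENNReal.ofReal (C * (1 + t) ^ (-β)) := by
  refine ⟨A.toReal + 1, by positivity, fun t ht => ?_⟩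
  have hgrowth : 1 ≤ (1 + t) ^ (-β) := Real.one_le_rpow (by linarith) (neg_nonneg.mpr hβ)
  calc f t ≤ ENNReal.ofReal A.toReal := by rw [ENNReal.ofReal_toReal hA]; exact hfA t ht
    _ ≤ _ := ENNReal.ofReal_le_ofReal (by nlinarith [ENNReal.toReal_nonneg (a := A)])

def sqNormMeasure (n : ℕ) (g : EuclideanSpace ℝ (Fin n) → ℂ) :
    Measure (EuclideanSpace ℝ (Fin n)) :=
  volume.withDensity fun ξ => ENNReal.ofReal (‖g ξ‖ ^ 2)

section sqNormMeasure

variable {n : ℕ} {g : EuclideanSpace ℝ (Fin n) → ℂ}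

lemma isFiniteMeasure_sqNormMeasure (hg : MemLp g 2 volume) : IsFiniteMeasure (sqNormMeasure n g) :=
  isFiniteMeasure_withDensity_ofReal (hg.integrable_norm_pow two_ne_zero).hasFiniteIntegral

lemma decayFun_eq_mul_sqNormMeasure (r ρ : ℝ) :
    decayFun n g r ρ =
      ENNReal.ofReal (ρ ^ (-(2 * r + (n : ℝ)))) * sqNormMeasure n g (closedBall 0 ρ) := by
  rw [decayFun, sqNormMeasure, withDensity_apply _ measurableSet_closedBall]
  congr 3
  ext ξ
  simp

lemma Ealpha_eq_lintegral_sqNormMeasure (hg : Measurable g) (α t : ℝ) :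
    Ealpha n g α t =
      ∫⁻ ξ, ENNReal.ofReal (Real.exp (-(2 * t) * ‖ξ‖ ^ (2 * α))) ∂sqNormMeasure n g := by
  rw [Ealpha, sqNormMeasure, lintegral_withDensity_eq_lintegral_mul _ (by fun_prop) (by fun_prop)]
  refine lintegral_congr fun ξ => ?_
  rw [Pi.mul_apply, ENNReal.ofReal_mul (Real.exp_pos _).le, mul_comm]

lemma Ealpha_le_sqNormMeasure_univ (hg : Measurable g) {α t : ℝ} (ht : 0 ≤ t) :
    Ealpha n g α t ≤ sqNormMeasure n g Set.univ := by
  rw [Ealpha_eq_lintegral_sqNormMeasure hg, ← lintegral_one]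
  refine lintegral_mono fun ξ => ENNReal.ofReal_le_one.mpr (Real.exp_le_one_iff.mpr ?_)
  have := Real.rpow_nonneg (norm_nonneg ξ) (2 * α)
  nlinarith

end sqNormMeasure

theorem stmt4_general (n : ℕ) (α : ℝ) (hα : 0 < α) (r : ℝ)
    (g : EuclideanSpace ℝ (Fin n) → ℂ)
    (hg_meas : Measurable g) (hg : MemLp g 2 (volume : Measure (EuclideanSpace ℝ (Fin n))))
    (hPp : Pplus n g r < ⊤) :
    ∃ C₂ : ℝ, 0 < C₂ ∧ ∀ t : ℝ, 0 ≤ t →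
      Ealpha n g α t ≤ ENNReal.ofReal (C₂ * (1 + t) ^ (-(r + (n : ℝ) / 2) / α)) := by
  have := isFiniteMeasure_sqNormMeasure hg
  set e := 2 * r + (n : ℝ)
  have hexponent : -(r + (n : ℝ) / 2) / α = -(e / (2 * α)) := by field_simp; ring
  have hbounded := fun t (ht : 0 ≤ t) => Ealpha_le_sqNormMeasure_univ (α := α) hg_meas ht
  rw [hexponent]
  rcases le_or_gt e 0 with he | he
  · exact exists_le_ofReal_mul_one_add_rpow_neg_of_nonpos (measure_ne_top _ _)
      (div_nonpos_of_nonpos_of_nonneg he (by positivity)) hbounded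
  · obtain ⟨K, hK, hball⟩ := exists_measure_closedBall_le_mul_rpow (sqNormMeasure n g) 0 he.le
      (by simpa only [Pplus, decayFun_eq_mul_sqNormMeasure] using hPp)
    refine exists_le_ofReal_mul_one_add_rpow_neg (measure_ne_top _ _)
      (D := K * ENNReal.ofReal (1 + dyadicExpSum (2 * α) e)) (by finiteness) (by positivity)
      hbounded fun t ht => ?_
    calc Ealpha n g α t
        ≤ K * ENNReal.ofReal (1 + dyadicExpSum (2 * α) e) *
            ENNReal.ofReal ((2 * t) ^ (-(e / (2 * α)))) := by
          rw [Ealpha_eq_lintegral_sqNormMeasure hg_meas]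
          exact lintegral_exp_neg_mul_rpow_le _ (by positivity) (by positivity) hball
      _ ≤ _ := by
          gcongr _ * ENNReal.ofReal ?_
          exact Real.rpow_le_rpow_of_nonpos ht (by linarith) (neg_nonpos.mpr (by positivity))

theorem stmt4 (n : ℕ) (hn : 1 ≤ n) (α : ℝ) (hα : 0 < α) (r : ℝ)
    (g : EuclideanSpace ℝ (Fin n) → ℂ)
    (hg_meas : Measurable g) (hg : MemLp g 2 (volume : Measure (EuclideanSpace ℝ (Fin n))))
    (hPp : Pplus n g r < ⊤) :
    ∃ C₂ : ℝ, 0 < C₂ ∧ ∀ t : ℝ, 0 ≤ t →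
      Ealpha n g α t ≤ ENNReal.ofReal (C₂ * (1 + t) ^ (-(r + (n : ℝ) / 2) / α)) :=
  stmt4_general n α hα r g hg_meas hg hPp
end
end

section
/- Let n ≥ 1, α > 0, r* ∈ (−n/2, ∞), and let g ∈ L²(ℝⁿ) be measurable. Then the following are equivalent: (a) 0 < P_{r*}(g)₋ and P_{r*}(g)₊ < ∞ (i.e. the decay character of g exists and equals r*); (b) there exist constants C₁, C₂ > 0 such that for all t ≥ 0: C₁ (1+t)^{−(r*+n/2)/α} ≤ ∫_{ℝⁿ} e^{−2t|ξ|^{2α}} |g(ξ)|² dξ ≤ C₂ (1+t)^{−(r*+n/2)/α}. -/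
open MeasureTheory Filter Topology
open scoped ENNReal NNReal

noncomputable section

/-!
With `μ = |g(ξ)|² dξ`, a finite measure, the condition `0 < P₋, P₊ < ∞` says exactly that
`μ{|ξ| ≤ ρ} ≍ ρ^(2r* + n)` as `ρ → 0⁺`. Put `φ(ξ) = 2|ξ|^(2α)`: the ball of radius `ρ` is the
sublevel set `{φ ≤ 2ρ^(2α)}`, so this reads `μ{φ ≤ ε} ≍ ε^κ` with `κ = (r* + n/2)/α`, and
`E_α(t) = ∫ e^(-tφ) dμ` is the Laplace transform of the law of `φ`. Such small-ball bounds are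
equivalent to `E_α(t) ≍ (1+t)^(-κ)` on `t ≥ 0`:
* `e^(-tε) μ{φ ≤ ε} ≤ E_α(t)`, used at `ε = ε₀/(1+t)`, bounds `E_α` from below, and used at
  `t = 1/ε` bounds small balls from above;
* the layer-cake identity `E_α(t) = ∫₀^∞ e^(-u) μ{tφ < u} du` turns `μ{φ ≤ ε} ≲ ε^κ` into
  `E_α(t) ≲ Γ(κ+1) t^(-κ)`;
* `E_α(2t) ≤ μ{φ ≤ ε} + e^(-tε) E_α(t)`, used at `t = A/ε` with `A` large, bounds small balls
  from below.
-/

open Asymptotics ProbabilityTheory Set Real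

section IsTheta

variable {ι : Type*} {l : Filter ι} {f g : ι → ℝ}

lemma isTheta_iff_exists_bounds (hf : ∀ᶠ x in l, 0 ≤ f x) (hg : ∀ᶠ x in l, 0 < g x) :
    f =Θ[l] g ↔ ∃ c C : ℝ, 0 < c ∧ 0 < C ∧ ∀ᶠ x in l, c * g x ≤ f x ∧ f x ≤ C * g x := by
  constructor
  · rintro ⟨hfg, hgf⟩
    obtain ⟨C, hC, hfC⟩ := isBigO_iff'.mp hfg
    obtain ⟨c', hc', hgc⟩ := isBigO_iff'.mp hgf
    refine ⟨c'⁻¹, C, inv_pos.mpr hc', hC, ?_⟩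
    filter_upwards [hf, hg, hfC, hgc] with x hfx hgx hfCx hgcx
    rw [norm_of_nonneg hfx, norm_of_nonneg hgx.le] at hfCx hgcx
    exact ⟨(inv_mul_le_iff₀ hc').mpr hgcx, hfCx⟩
  · rintro ⟨c, C, hc, hC, hb⟩
    refine ⟨IsBigO.of_bound C ?_, IsBigO.of_bound c⁻¹ ?_⟩
    · filter_upwards [hf, hg, hb] with x hfx hgx hbx
      rw [norm_of_nonneg hfx, norm_of_nonneg hgx.le]; exact hbx.2
    · filter_upwards [hf, hg, hb] with x hfx hgx hbx
      rw [norm_of_nonneg hfx, norm_of_nonneg hgx.le, le_inv_mul_iff₀ hc]; exact hbx.1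

lemma liminf_ofReal_div_pos_and_limsup_lt_top_iff (hf : ∀ᶠ x in l, 0 ≤ f x)
    (hg : ∀ᶠ x in l, 0 < g x) :
    (0 < liminf (fun x => ENNReal.ofReal (f x / g x)) l ∧
      limsup (fun x => ENNReal.ofReal (f x / g x)) l < ⊤) ↔ f =Θ[l] g := by
  rw [isTheta_iff_exists_bounds hf hg]
  constructor
  · rintro ⟨hlow, hup⟩
    obtain ⟨c, -, hc, hcl⟩ := ENNReal.lt_iff_exists_real_btwn.mp hlow
    obtain ⟨C, -, hCl, -⟩ := ENNReal.lt_iff_exists_real_btwn.mp hup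
    refine ⟨c, C, ENNReal.ofReal_pos.mp hc,
      ENNReal.ofReal_pos.mp (bot_le.trans_lt hCl), ?_⟩
    filter_upwards [eventually_lt_of_lt_liminf hcl, eventually_lt_of_limsup_lt hCl, hg]
      with x hcx hCx hgx
    rw [ENNReal.ofReal_lt_ofReal_iff'] at hcx hCx
    exact ⟨(le_div_iff₀ hgx).mp hcx.1.le, (div_le_iff₀ hgx).mp hCx.1.le⟩
  · rintro ⟨c, C, hc, -, hb⟩
    have hb' : ∀ᶠ x in l, ENNReal.ofReal c ≤ ENNReal.ofReal (f x / g x) ∧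
        ENNReal.ofReal (f x / g x) ≤ ENNReal.ofReal C := by
      filter_upwards [hb, hg] with x hbx hgx
      exact ⟨ENNReal.ofReal_le_ofReal ((le_div_iff₀ hgx).mpr hbx.1),
        ENNReal.ofReal_le_ofReal ((div_le_iff₀ hgx).mpr hbx.2)⟩
    exact ⟨(ENNReal.ofReal_pos.mpr hc).trans_le (le_liminf_of_le (by isBoundedDefault)
        (hb'.mono fun _ => And.left)),
      (limsup_le_of_le (by isBoundedDefault) (hb'.mono fun _ => And.right)).trans_lt
        ENNReal.ofReal_lt_top⟩

end IsTheta

lemma tendsto_mul_rpow_nhdsGT_zero {a p : ℝ} (ha : 0 < a) (hp : 0 < p) :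
    Tendsto (fun ρ : ℝ => a * ρ ^ p) (𝓝[>] 0) (𝓝[>] 0) := by
  refine tendsto_nhdsWithin_iff.mpr ⟨?_, ?_⟩
  · have := ((continuousAt_rpow_const 0 p (Or.inr hp.le)).const_mul a).tendsto
    rw [zero_rpow hp.ne', mul_zero] at this
    exact this.mono_left nhdsWithin_le_nhds
  · filter_upwards [self_mem_nhdsWithin] with ρ hρ using mul_pos ha (rpow_pos_of_pos hρ p)

lemma Asymptotics.IsTheta.comp_mul_rpow {F : ℝ → ℝ} {a p κ : ℝ} (ha : 0 < a) (hp : 0 < p)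
    (h : F =Θ[𝓝[>] 0] fun ε => ε ^ κ) :
    (fun ρ => F (a * ρ ^ p)) =Θ[𝓝[>] 0] fun ρ => ρ ^ (p * κ) := by
  have hk := tendsto_mul_rpow_nhdsGT_zero ha hp
  have hcomp : (fun ρ => F (a * ρ ^ p)) =Θ[𝓝[>] 0] fun ρ => (a * ρ ^ p) ^ κ :=
    ⟨h.1.comp_tendsto hk, h.2.comp_tendsto hk⟩
  refine hcomp.trans (EventuallyEq.trans_isTheta ?_
    ((isTheta_const_mul_left (rpow_pos_of_pos ha κ).ne').mpr isTheta_rfl))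
  filter_upwards [self_mem_nhdsWithin] with ρ (hρ : 0 < ρ)
  rw [mul_rpow ha.le (rpow_nonneg hρ.le p), ← rpow_mul hρ.le]

lemma isTheta_comp_mul_rpow_iff {F : ℝ → ℝ} {a p κ : ℝ} (ha : 0 < a) (hp : 0 < p) :
    (fun ρ => F (a * ρ ^ p)) =Θ[𝓝[>] 0] (fun ρ => ρ ^ (p * κ)) ↔
      F =Θ[𝓝[>] 0] fun ε => ε ^ κ := by
  refine ⟨fun h => ?_, IsTheta.comp_mul_rpow ha hp⟩
  have h' := h.comp_mul_rpow (rpow_pos_of_pos (inv_pos.mpr ha) p⁻¹) (inv_pos.mpr hp)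
  rw [inv_mul_cancel_left₀ hp.ne'] at h'
  refine EventuallyEq.trans_isTheta ?_ h'
  filter_upwards [self_mem_nhdsWithin] with ε (hε : 0 < ε)
  rw [mul_rpow (by positivity) (by positivity), ← rpow_mul (by positivity),
    ← rpow_mul hε.le, inv_mul_cancel₀ hp.ne', rpow_one, rpow_one, mul_inv_cancel_left₀ ha.ne']

lemma rpow_neg_le_mul_rpow_neg {x y a κ : ℝ} (hx : 0 < x) (hy : 0 < y) (hyx : y ≤ a * x)
    (hκ : 0 ≤ κ) : x ^ (-κ) ≤ a ^ κ * y ^ (-κ) := by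
  have ha : 0 < a := pos_of_mul_pos_left (hy.trans_le hyx) hx.le
  calc x ^ (-κ) = a ^ κ * (a * x) ^ (-κ) := by
        rw [mul_rpow ha.le hx.le, ← mul_assoc, rpow_neg ha.le, mul_inv_cancel₀ (by positivity),
          one_mul]
    _ ≤ a ^ κ * y ^ (-κ) :=
        mul_le_mul_of_nonneg_left (rpow_le_rpow_of_nonpos hy hyx (neg_nonpos.mpr hκ))
          (by positivity)

lemma exp_neg_mul_le_one {s a : ℝ} (hs : 0 ≤ s) (ha : 0 ≤ a) : exp (-s * a) ≤ 1 :=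
  exp_le_one_iff.mpr (by nlinarith [mul_nonneg hs ha])

lemma ofReal_exp_neg_eq_setLIntegral (c : ℝ) :
    ENNReal.ofReal (exp (-c)) = ∫⁻ u in Ioi c, ENNReal.ofReal (exp (-u)) := by
  rw [← ofReal_integral_eq_lintegral_ofReal (integrableOn_exp_neg_Ioi c)
    (ae_of_all _ fun u => (exp_pos _).le), integral_exp_neg_Ioi]

lemma setLIntegral_ofReal_exp_neg_mul_rpow {κ : ℝ} (hκ : -1 < κ) :
    ∫⁻ u in Ioi 0, ENNReal.ofReal (exp (-u) * u ^ κ) = ENNReal.ofReal (Gamma (κ + 1)) := by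
  have hκ1 : 0 < κ + 1 := by linarith
  rw [Gamma_eq_integral hκ1, add_sub_cancel_right, ofReal_integral_eq_lintegral_ofReal]
  · simpa only [add_sub_cancel_right] using (GammaIntegral_convergent hκ1).integrable
  · filter_upwards [ae_restrict_mem measurableSet_Ioi] with u (hu : 0 < u)
    positivity

section Sublevel

variable {X : Type*} [MeasurableSpace X] {μ : Measure X} {φ : X → ℝ}

lemma lintegral_ofReal_exp_neg_eq [SFinite μ] (hφ : Measurable φ) (hφ0 : 0 ≤ φ) :
    ∫⁻ x, ENNReal.ofReal (exp (-φ x)) ∂μ =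
      ∫⁻ u in Ioi 0, ENNReal.ofReal (exp (-u)) * μ {x | φ x < u} := by
  set f : ℝ → ℝ≥0∞ := fun u => ENNReal.ofReal (exp (-u))
  have hf : Measurable f := (measurable_exp.comp measurable_neg).ennreal_ofReal
  have hS : MeasurableSet {p : X × ℝ | φ p.1 < p.2} :=
    measurableSet_lt (hφ.comp measurable_fst) measurable_snd
  calc ∫⁻ x, f (φ x) ∂μ
      = ∫⁻ x, ∫⁻ u, {p : X × ℝ | φ p.1 < p.2}.indicator (fun p => f p.2) (x, u) ∂volume ∂μ := by
        refine lintegral_congr fun x => ?_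
        exact (ofReal_exp_neg_eq_setLIntegral (φ x)).trans
          (lintegral_indicator measurableSet_Ioi _).symm
    _ = ∫⁻ u, ∫⁻ x, {x | φ x < u}.indicator (fun _ => f u) x ∂μ :=
        lintegral_lintegral_swap (f := fun x u => {p : X × ℝ | φ p.1 < p.2}.indicator
          (fun p => f p.2) (x, u)) ((hf.comp measurable_snd).indicator hS).aemeasurable
    _ = ∫⁻ u, f u * μ {x | φ x < u} := by
        simp_rw [lintegral_indicator_const (measurableSet_lt hφ measurable_const)]
    _ = ∫⁻ u in Ioi 0, f u * μ {x | φ x < u} := by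
        refine (setLIntegral_eq_of_support_subset fun u hu => ?_).symm
        by_contra hu0
        have : {x | φ x < u} = ∅ :=
          eq_empty_of_forall_notMem fun x hx => hu0 ((hφ0 x).trans_lt hx)
        simp [this] at hu

variable [IsFiniteMeasure μ]

lemma integrable_exp_neg_mul (hφ : Measurable φ) (hφ0 : 0 ≤ φ) {s : ℝ} (hs : 0 ≤ s) :
    Integrable (fun x => exp (-s * φ x)) μ :=
  .of_bound (by fun_prop) 1 (ae_of_all _ fun x => by
    rw [norm_of_nonneg (exp_pos _).le]; exact exp_neg_mul_le_one hs (hφ0 x))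

lemma mgf_neg_le_measureReal_univ (hφ0 : 0 ≤ φ) {s : ℝ} (hs : 0 ≤ s) :
    mgf φ μ (-s) ≤ μ.real univ := by
  have h := norm_integral_le_of_norm_le_const (μ := μ) (f := fun x => exp (-s * φ x))
    (ae_of_all _ fun x => by
      rw [norm_of_nonneg (exp_pos _).le]; exact exp_neg_mul_le_one hs (hφ0 x))
  rw [one_mul] at h
  exact (le_abs_self _).trans h

lemma exp_neg_mul_mul_measureReal_le_mgf (hφ : Measurable φ) (hφ0 : 0 ≤ φ) {s : ℝ}
    (hs : 0 ≤ s) (ε : ℝ) :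
    exp (-(s * ε)) * μ.real {x | φ x ≤ ε} ≤ mgf φ μ (-s) := by
  calc exp (-(s * ε)) * μ.real {x | φ x ≤ ε}
      ≤ exp (-(s * ε)) * μ.real {x | exp (-(s * ε)) ≤ exp (-s * φ x)} := by
        refine mul_le_mul_of_nonneg_left (measureReal_mono fun x (hx : φ x ≤ ε) => ?_)
          (exp_pos _).le
        rw [mem_ofPred_eq, exp_le_exp]
        nlinarith
    _ ≤ mgf φ μ (-s) :=
        mul_meas_ge_le_integral_of_nonneg (ae_of_all _ fun x => (exp_pos _).le)
          (integrable_exp_neg_mul hφ hφ0 hs) _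

lemma mgf_neg_two_mul_le (hφ : Measurable φ) (hφ0 : 0 ≤ φ) {s : ℝ} (hs : 0 ≤ s) (ε : ℝ) :
    mgf φ μ (-(2 * s)) ≤ μ.real {x | φ x ≤ ε} + exp (-(s * ε)) * mgf φ μ (-s) := by
  have hSε : MeasurableSet {x | φ x ≤ ε} := measurableSet_le hφ measurable_const
  have hind : Integrable ({x | φ x ≤ ε}.indicator (1 : X → ℝ)) μ :=
    (integrable_const 1).indicator hSε
  have hexp := (integrable_exp_neg_mul hφ hφ0 hs (μ := μ)).const_mul (exp (-(s * ε)))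
  rw [mgf, mgf, ← integral_indicator_one (μ := μ) hSε, ← integral_const_mul,
    ← integral_add hind hexp]
  refine integral_mono (integrable_exp_neg_mul hφ hφ0 (by linarith)) (hind.add hexp) fun x => ?_
  by_cases hx : φ x ≤ ε
  · have := exp_neg_mul_le_one (by linarith : 0 ≤ 2 * s) (hφ0 x)
    simp only [indicator_of_mem (show x ∈ {x | φ x ≤ ε} from hx), Pi.one_apply]
    nlinarith [exp_pos (-(s * ε)), exp_pos (-s * φ x)]
  · rw [indicator_of_notMem (show x ∉ {x | φ x ≤ ε} from hx), zero_add, ← exp_add, exp_le_exp]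
    nlinarith [not_le.mp hx]

lemma mgf_neg_le_of_measureReal_le (hφ : Measurable φ) (hφ0 : 0 ≤ φ) {C κ : ℝ} (hκ : -1 < κ)
    (hC : ∀ ε > 0, μ.real {x | φ x ≤ ε} ≤ C * ε ^ κ) {s : ℝ} (hs : 0 < s) :
    mgf φ μ (-s) ≤ C * Gamma (κ + 1) * s ^ (-κ) := by
  have hC0 : 0 ≤ C := by simpa using measureReal_nonneg.trans (hC 1 one_pos)
  have hΓ : 0 < Gamma (κ + 1) := Gamma_pos_of_pos (by linarith)
  rw [← ENNReal.ofReal_le_ofReal_iff (by positivity), mgf,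
    ofReal_integral_eq_lintegral_ofReal (integrable_exp_neg_mul hφ hφ0 hs.le)
      (ae_of_all _ fun _ => (exp_pos _).le)]
  simp_rw [neg_mul]
  rw [lintegral_ofReal_exp_neg_eq (hφ.const_mul s) fun x => mul_nonneg hs.le (hφ0 x)]
  calc ∫⁻ u in Ioi 0, ENNReal.ofReal (exp (-u)) * μ {x | s * φ x < u}
      ≤ ∫⁻ u in Ioi 0, ENNReal.ofReal (C * s ^ (-κ)) * ENNReal.ofReal (exp (-u) * u ^ κ) := by
        refine setLIntegral_mono' measurableSet_Ioi fun u (hu : 0 < u) => ?_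
        have hsub : {x | s * φ x < u} ⊆ {x | φ x ≤ u / s} := fun x (hx : s * φ x < u) =>
          (le_div_iff₀' hs).mpr hx.le
        calc ENNReal.ofReal (exp (-u)) * μ {x | s * φ x < u}
            ≤ ENNReal.ofReal (exp (-u)) * ENNReal.ofReal (C * (u / s) ^ κ) := by
              gcongr
              rw [← ofReal_measureReal]
              exact ENNReal.ofReal_le_ofReal ((measureReal_mono hsub).trans (hC _ (div_pos hu hs)))
          _ = ENNReal.ofReal (C * s ^ (-κ)) * ENNReal.ofReal (exp (-u) * u ^ κ) := by
              rw [← ENNReal.ofReal_mul (exp_pos _).le, ← ENNReal.ofReal_mul (by positivity),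
                div_rpow hu.le hs.le, rpow_neg hs.le]
              ring_nf
    _ = ENNReal.ofReal (C * Gamma (κ + 1) * s ^ (-κ)) := by
        rw [lintegral_const_mul' _ _ ENNReal.ofReal_ne_top,
          setLIntegral_ofReal_exp_neg_mul_rpow hκ, ← ENNReal.ofReal_mul (by positivity)]
        ring_nf

lemma exists_le_mgf_neg_of_le_measureReal (hφ : Measurable φ) (hφ0 : 0 ≤ φ) {c κ : ℝ}
    (hc : 0 < c) (h : ∀ᶠ ε in 𝓝[>] 0, c * ε ^ κ ≤ μ.real {x | φ x ≤ ε}) :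
    ∃ c' > 0, ∀ s, 0 ≤ s → c' * (1 + s) ^ (-κ) ≤ mgf φ μ (-s) := by
  obtain ⟨ε₀, hε₀ : 0 < ε₀, hsub⟩ := mem_nhdsGT_iff_exists_Ioc_subset.mp h
  refine ⟨exp (-ε₀) * c * ε₀ ^ κ, by positivity, fun s hs => ?_⟩
  set ε := ε₀ / (1 + s)
  have hε : ε ∈ Ioc 0 ε₀ := ⟨by positivity, div_le_self hε₀.le (by linarith)⟩
  have hsε : s * ε ≤ ε₀ := by
    rw [mul_div_assoc', div_le_iff₀ (by linarith)]
    nlinarith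
  calc exp (-ε₀) * c * ε₀ ^ κ * (1 + s) ^ (-κ) = exp (-ε₀) * (c * ε ^ κ) := by
        rw [div_rpow hε₀.le (by linarith), div_eq_mul_inv, ← rpow_neg (by linarith)]
        ring
    _ ≤ exp (-(s * ε)) * μ.real {x | φ x ≤ ε} := by
        gcongr
        exact hsub hε
    _ ≤ mgf φ μ (-s) := exp_neg_mul_mul_measureReal_le_mgf hφ hφ0 hs ε

lemma exists_mgf_neg_le_of_measureReal_le (hφ : Measurable φ) (hφ0 : 0 ≤ φ) {C κ : ℝ}
    (hC : 0 < C) (hκ : 0 < κ) (h : ∀ᶠ ε in 𝓝[>] 0, μ.real {x | φ x ≤ ε} ≤ C * ε ^ κ) :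
    ∃ C' > 0, ∀ s, 0 ≤ s → mgf φ μ (-s) ≤ C' * (1 + s) ^ (-κ) := by
  obtain ⟨ε₀, hε₀ : 0 < ε₀, hsub⟩ := mem_nhdsGT_iff_exists_Ioc_subset.mp h
  set M := μ.real univ
  set K := max C (M / ε₀ ^ κ)
  have hK : 0 < K := hC.trans_le (le_max_left _ _)
  have hglobal : ∀ ε > 0, μ.real {x | φ x ≤ ε} ≤ K * ε ^ κ := by
    intro ε hε
    rcases le_or_gt ε ε₀ with hle | hgt
    · exact (hsub ⟨hε, hle⟩).trans (by gcongr; exact le_max_left _ _)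
    · calc μ.real {x | φ x ≤ ε} ≤ M := measureReal_mono (subset_univ _)
        _ = M / ε₀ ^ κ * ε₀ ^ κ := (div_mul_cancel₀ _ (by positivity)).symm
        _ ≤ K * ε ^ κ := by gcongr; exact le_max_right _ _
  set B := max (K * Gamma (κ + 1)) M
  have hB : 0 < B := lt_max_of_lt_left (mul_pos hK (Gamma_pos_of_pos (by linarith)))
  refine ⟨2 ^ κ * B, by positivity, fun s hs => ?_⟩
  have hcompare : ∀ x, 0 < x → 1 + s ≤ 2 * x → B * x ^ (-κ) ≤ 2 ^ κ * B * (1 + s) ^ (-κ) :=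
    fun x hx hsx => by
      rw [mul_comm (2 ^ κ) B, mul_assoc]
      gcongr
      exact rpow_neg_le_mul_rpow_neg hx (by linarith) hsx hκ.le
  rcases le_or_gt s 1 with hs1 | hs1
  · calc mgf φ μ (-s) ≤ B * 1 ^ (-κ) := by
          rw [one_rpow, mul_one]
          exact (mgf_neg_le_measureReal_univ hφ0 hs).trans (le_max_right _ _)
      _ ≤ 2 ^ κ * B * (1 + s) ^ (-κ) := hcompare 1 one_pos (by linarith)
  · calc mgf φ μ (-s) ≤ B * s ^ (-κ) :=
          (mgf_neg_le_of_measureReal_le hφ hφ0 (by linarith) hglobal (by linarith)).trans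
            (by gcongr; exact le_max_left _ _)
      _ ≤ 2 ^ κ * B * (1 + s) ^ (-κ) := hcompare s (by linarith) (by linarith)

lemma measureReal_le_of_mgf_neg_le (hφ : Measurable φ) (hφ0 : 0 ≤ φ) {C κ : ℝ} (hκ : 0 ≤ κ)
    (h : ∀ s, 0 ≤ s → mgf φ μ (-s) ≤ C * (1 + s) ^ (-κ)) {ε : ℝ} (hε : 0 < ε) :
    μ.real {x | φ x ≤ ε} ≤ exp 1 * C * ε ^ κ := by
  have hC : 0 ≤ C := by simpa using mgf_nonneg.trans (h 0 le_rfl)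
  have hmgf := (exp_neg_mul_mul_measureReal_le_mgf (μ := μ) hφ hφ0 (inv_pos.mpr hε).le ε).trans
    (h ε⁻¹ (inv_pos.mpr hε).le)
  rw [inv_mul_cancel₀ hε.ne'] at hmgf
  calc μ.real {x | φ x ≤ ε} = exp 1 * (exp (-1) * μ.real {x | φ x ≤ ε}) := by
        rw [← mul_assoc, ← exp_add, add_neg_cancel, exp_zero, one_mul]
    _ ≤ exp 1 * (C * (ε⁻¹) ^ (-κ)) := by
        refine mul_le_mul_of_nonneg_left (hmgf.trans (mul_le_mul_of_nonneg_left ?_ hC))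
          (exp_pos 1).le
        exact rpow_le_rpow_of_nonpos (inv_pos.mpr hε) (by linarith) (neg_nonpos.mpr hκ)
    _ = exp 1 * C * ε ^ κ := by
        rw [rpow_neg (inv_pos.mpr hε).le, inv_rpow hε.le, inv_inv, mul_assoc]

lemma exists_le_measureReal_of_le_mgf_neg (hφ : Measurable φ) (hφ0 : 0 ≤ φ) {c C κ : ℝ}
    (hc : 0 < c) (hκ : 0 ≤ κ) (hlow : ∀ s, 0 ≤ s → c * (1 + s) ^ (-κ) ≤ mgf φ μ (-s))
    (hup : ∀ s, 0 ≤ s → mgf φ μ (-s) ≤ C * (1 + s) ^ (-κ)) :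
    ∃ c' > 0, ∀ ε ∈ Ioc 0 1, c' * ε ^ κ ≤ μ.real {x | φ x ≤ ε} := by
  have hC : 0 ≤ C := by simpa using mgf_nonneg.trans (hup 0 le_rfl)
  -- `A` is so large that the tail `exp (-A) * mgf φ μ (-s)` eats at most half of the lower
  -- bound `c * (1 + 2s) ^ (-κ)` on `mgf φ μ (-(2 * s))`.
  obtain ⟨A, hA, hA0⟩ : ∃ A, C * 2 ^ κ * exp (-A) ≤ c / 2 ∧ 0 ≤ A := by
    have := tendsto_exp_neg_atTop_nhds_zero.const_mul (C * 2 ^ κ)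
    rw [mul_zero] at this
    exact ((this.eventually (eventually_le_nhds (half_pos hc))).and
      (eventually_ge_atTop 0)).exists
  refine ⟨c / 2 * (1 + 2 * A) ^ (-κ), by positivity, fun ε ⟨hε, hε1⟩ => ?_⟩
  set s := A / ε
  have hs : 0 ≤ s := by positivity
  have hsplit := mgf_neg_two_mul_le (μ := μ) hφ hφ0 hs ε
  rw [div_mul_cancel₀ A hε.ne'] at hsplit
  have htail : exp (-A) * mgf φ μ (-s) ≤ c / 2 * (1 + 2 * s) ^ (-κ) :=
    calc exp (-A) * mgf φ μ (-s) ≤ exp (-A) * (C * (2 ^ κ * (1 + 2 * s) ^ (-κ))) := by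
          refine mul_le_mul_of_nonneg_left ((hup s hs).trans (mul_le_mul_of_nonneg_left ?_ hC))
            (exp_pos _).le
          exact rpow_neg_le_mul_rpow_neg (by linarith) (by linarith) (by linarith) hκ
      _ = C * 2 ^ κ * exp (-A) * (1 + 2 * s) ^ (-κ) := by ring
      _ ≤ c / 2 * (1 + 2 * s) ^ (-κ) := by gcongr
  have hradius : (1 + 2 * A) ^ (-κ) * ε ^ κ ≤ (1 + 2 * s) ^ (-κ) := by
    have h2s : 1 + 2 * s ≤ (1 + 2 * A) / ε := by
      rw [le_div_iff₀ hε, add_mul, mul_assoc, div_mul_cancel₀ A hε.ne']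
      linarith
    calc (1 + 2 * A) ^ (-κ) * ε ^ κ = ((1 + 2 * A) / ε) ^ (-κ) := by
          rw [div_rpow (by positivity) hε.le, rpow_neg hε.le, div_inv_eq_mul]
      _ ≤ (1 + 2 * s) ^ (-κ) := rpow_le_rpow_of_nonpos (by positivity) h2s (neg_nonpos.mpr hκ)
  calc c / 2 * (1 + 2 * A) ^ (-κ) * ε ^ κ ≤ c / 2 * (1 + 2 * s) ^ (-κ) := by
        rw [mul_assoc]; gcongr
    _ ≤ mgf φ μ (-(2 * s)) - exp (-A) * mgf φ μ (-s) := by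
        linarith [hlow (2 * s) (by positivity)]
    _ ≤ μ.real {x | φ x ≤ ε} := by linarith

theorem isTheta_measureReal_setOf_le_iff (hφ : Measurable φ) (hφ0 : 0 ≤ φ) {κ : ℝ}
    (hκ : 0 < κ) :
    (fun ε => μ.real {x | φ x ≤ ε}) =Θ[𝓝[>] 0] (fun ε => ε ^ κ) ↔
      ∃ c C : ℝ, 0 < c ∧ 0 < C ∧ ∀ s, 0 ≤ s →
        c * (1 + s) ^ (-κ) ≤ mgf φ μ (-s) ∧ mgf φ μ (-s) ≤ C * (1 + s) ^ (-κ) := by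
  have hpos : ∀ᶠ ε in 𝓝[>] (0 : ℝ), 0 < ε ^ κ :=
    eventually_mem_nhdsWithin.mono fun ε hε => rpow_pos_of_pos hε κ
  rw [isTheta_iff_exists_bounds (.of_forall fun _ => measureReal_nonneg) hpos]
  constructor
  · rintro ⟨c, C, hc, hC, h⟩
    obtain ⟨c', hc', hlow⟩ :=
      exists_le_mgf_neg_of_le_measureReal hφ hφ0 hc (h.mono fun _ => And.left)
    obtain ⟨C', hC', hup⟩ :=
      exists_mgf_neg_le_of_measureReal_le hφ hφ0 hC hκ (h.mono fun _ => And.right)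
    exact ⟨c', C', hc', hC', fun s hs => ⟨hlow s hs, hup s hs⟩⟩
  · rintro ⟨c, C, hc, hC, h⟩
    obtain ⟨c', hc', hlow⟩ := exists_le_measureReal_of_le_mgf_neg hφ hφ0 hc hκ.le
      (fun s hs => (h s hs).1) (fun s hs => (h s hs).2)
    refine ⟨c', exp 1 * C, hc', by positivity, ?_⟩
    filter_upwards [Ioc_mem_nhdsGT one_pos] with ε hε
    exact ⟨hlow ε hε, measureReal_le_of_mgf_neg_le hφ hφ0 hκ.le (fun s hs => (h s hs).2) hε.1⟩

end Sublevel

lemma isFiniteMeasure_withDensity_sq_norm {E : Type*} [MeasurableSpace E] {μ : Measure E}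
    {g : E → ℂ} (hg : MemLp g 2 μ) :
    IsFiniteMeasure (μ.withDensity fun ξ => ENNReal.ofReal (‖g ξ‖ ^ 2)) :=
  isFiniteMeasure_withDensity_ofReal
    ((memLp_two_iff_integrable_sq_norm hg.1).mp hg).hasFiniteIntegral

section Euclidean

variable {n : ℕ} {g : EuclideanSpace ℝ (Fin n) → ℂ}

lemma Ealpha_eq_ofReal_mgf (hg : MemLp g 2 volume) {α t : ℝ} (ht : 0 ≤ t) :
    Ealpha n g α t = ENNReal.ofReal (mgf (fun ξ => 2 * ‖ξ‖ ^ (2 * α))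
      (volume.withDensity fun ξ => ENNReal.ofReal (‖g ξ‖ ^ 2)) (-t)) := by
  have := isFiniteMeasure_withDensity_sq_norm hg
  rw [mgf, ofReal_integral_eq_lintegral_ofReal
      (integrable_exp_neg_mul (by fun_prop) (fun ξ => by positivity) ht)
      (ae_of_all _ fun _ => (exp_pos _).le),
    lintegral_withDensity_eq_lintegral_mul₀ (hg.1.norm.aemeasurable.pow_const 2).ennreal_ofReal
      (by fun_prop), Ealpha]
  refine lintegral_congr fun ξ => ?_
  rw [Pi.mul_apply, ← ENNReal.ofReal_mul (by positivity)]
  ring_nf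

lemma decayFun_eq_ofReal_div (hg : MemLp g 2 volume) (r : ℝ) {ρ : ℝ} (hρ : 0 < ρ) :
    decayFun n g r ρ = ENNReal.ofReal
      ((volume.withDensity fun ξ => ENNReal.ofReal (‖g ξ‖ ^ 2)).real {ξ | ‖ξ‖ ≤ ρ} /
        ρ ^ (2 * r + n)) := by
  have := isFiniteMeasure_withDensity_sq_norm hg
  rw [decayFun, ← withDensity_apply _ (measurableSet_le measurable_norm measurable_const),
    ← ofReal_measureReal, ← ENNReal.ofReal_mul (rpow_nonneg hρ.le _), rpow_neg hρ.le,
    inv_mul_eq_div]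

end Euclidean

theorem stmt5_general (n : ℕ) (α : ℝ) (hα : 0 < α) (rstar : ℝ)
    (hlow : -(n : ℝ) / 2 < rstar)
    (g : EuclideanSpace ℝ (Fin n) → ℂ)
    (hg : MemLp g 2 (volume : Measure (EuclideanSpace ℝ (Fin n)))) :
    (0 < Pminus n g rstar ∧ Pplus n g rstar < ⊤) ↔
    (∃ C₁ C₂ : ℝ, 0 < C₁ ∧ 0 < C₂ ∧ ∀ t : ℝ, 0 ≤ t →
      ENNReal.ofReal (C₁ * (1 + t) ^ (-(rstar + (n : ℝ) / 2) / α)) ≤ Ealpha n g α t ∧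
      Ealpha n g α t ≤ ENNReal.ofReal (C₂ * (1 + t) ^ (-(rstar + (n : ℝ) / 2) / α))) := by
  set μ := volume.withDensity fun ξ : EuclideanSpace ℝ (Fin n) => ENNReal.ofReal (‖g ξ‖ ^ 2)
  have := isFiniteMeasure_withDensity_sq_norm hg
  set φ : EuclideanSpace ℝ (Fin n) → ℝ := fun ξ => 2 * ‖ξ‖ ^ (2 * α)
  set κ := (rstar + n / 2) / α
  have hκ : 0 < κ := div_pos (by linarith) hα
  have hβ : 2 * α * κ = 2 * rstar + n := by
    simp only [κ]
    field_simp
  have hball : decayFun n g rstar =ᶠ[𝓝[>] 0]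
      fun ρ => ENNReal.ofReal (μ.real {ξ | φ ξ ≤ 2 * ρ ^ (2 * α)} / ρ ^ (2 * α * κ)) := by
    filter_upwards [self_mem_nhdsWithin] with ρ (hρ : 0 < ρ)
    have hsub : {ξ | φ ξ ≤ 2 * ρ ^ (2 * α)} = {ξ | ‖ξ‖ ≤ ρ} := by
      ext ξ
      simp [φ, rpow_le_rpow_iff (norm_nonneg ξ) hρ.le (by positivity : 0 < 2 * α)]
    rw [decayFun_eq_ofReal_div hg _ hρ, hsub, hβ]
  have hpos : ∀ᶠ ρ in 𝓝[>] (0 : ℝ), 0 < ρ ^ (2 * α * κ) :=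
    eventually_mem_nhdsWithin.mono fun ρ hρ => rpow_pos_of_pos hρ _
  rw [Pminus, Pplus, liminf_congr hball, limsup_congr hball,
    liminf_ofReal_div_pos_and_limsup_lt_top_iff (.of_forall fun _ => measureReal_nonneg) hpos,
    isTheta_comp_mul_rpow_iff (F := fun ε => μ.real {ξ | φ ξ ≤ ε}) two_pos (by positivity),
    isTheta_measureReal_setOf_le_iff (by fun_prop) (fun ξ => by positivity) hκ, neg_div]
  refine exists₂_congr fun _ _ => and_congr_right fun _ => and_congr_right fun hC =>
    forall₂_congr fun t ht => ?_
  rw [Ealpha_eq_ofReal_mgf hg ht, ENNReal.ofReal_le_ofReal_iff mgf_nonneg,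
    ENNReal.ofReal_le_ofReal_iff (by positivity)]

theorem stmt5 (n : ℕ) (hn : 1 ≤ n) (α : ℝ) (hα : 0 < α) (rstar : ℝ)
    (hlow : -(n : ℝ) / 2 < rstar)
    (g : EuclideanSpace ℝ (Fin n) → ℂ)
    (hg_meas : Measurable g) (hg : MemLp g 2 (volume : Measure (EuclideanSpace ℝ (Fin n)))) :
    (0 < Pminus n g rstar ∧ Pplus n g rstar < ⊤) ↔
    (∃ C₁ C₂ : ℝ, 0 < C₁ ∧ 0 < C₂ ∧ ∀ t : ℝ, 0 ≤ t →
      ENNReal.ofReal (C₁ * (1 + t) ^ (-(rstar + (n : ℝ) / 2) / α)) ≤ Ealpha n g α t ∧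
      Ealpha n g α t ≤ ENNReal.ofReal (C₂ * (1 + t) ^ (-(rstar + (n : ℝ) / 2) / α))) :=
  stmt5_general n α hα rstar hlow g hg
end
end

section
/- Let n ≥ 1, σ > 0, and let g : ℝⁿ → ℂ be measurable. Then g satisfies the weak A-condition with exponent 2σ if and only if both: sup_{t>0} t^{2σ} ∫_{ℝⁿ} e^{−2t|ξ|²} |g(ξ)|² dξ < ∞, and liminf_{t→+∞} t^{2σ} ∫_{ℝⁿ} e^{−2t|ξ|²} |g(ξ)|² dξ > 0. By Plancherel the integral equals ‖e^{tΔ}f‖_{L²}² for the tempered distribution f with Fourier transform g, so this characterizes the set 𝒜^{−2σ}_{2,∞} by the conditions t^σ‖e^{tΔ}f‖₂ ∈ L^∞(ℝ⁺) and liminf_{t→∞} t^σ‖e^{tΔ}f‖₂ > 0. -/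
open MeasureTheory Filter Topology
open scoped ENNReal NNReal

noncomputable section

/-- Sharp Littlewood–Paley block: `a_j(g) = (∫_{2^j ≤ |ξ| < 2^{j+1}} |g(ξ)|² dξ)^{1/2}`. -/
def ajBlock (n : ℕ) (g : EuclideanSpace ℝ (Fin n) → ℂ) (j : ℤ) : ℝ≥0∞ :=
  (∫⁻ ξ in {ξ : EuclideanSpace ℝ (Fin n) |
      (2 : ℝ) ^ (j : ℝ) ≤ ‖ξ‖ ∧ ‖ξ‖ < (2 : ℝ) ^ ((j : ℝ) + 1)},
    ENNReal.ofReal (‖g ξ‖ ^ 2)) ^ (1 / 2 : ℝ)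

/-- The strong A-condition with exponent `σ`: the Fourier-side description of `Ȧ^{-σ}_{2,∞}`. -/
def StrongACond (n : ℕ) (g : EuclideanSpace ℝ (Fin n) → ℂ) (σ : ℝ) : Prop :=
  ∃ c C : ℝ, 0 < c ∧ 0 < C ∧ ∃ M : ℕ, 0 < M ∧
    (∀ j : ℤ, ajBlock n g j ≤ ENNReal.ofReal (C * (2 : ℝ) ^ (σ * (j : ℝ)))) ∧
    (∀ j₀ : ℤ, ∃ j : ℤ, j₀ ≤ j ∧ j < j₀ + M ∧
      ENNReal.ofReal (c * (2 : ℝ) ^ (σ * (j : ℝ))) ≤ ajBlock n g j)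

/-- The weak A-condition with exponent `σ`: the Fourier-side description of `𝒜^{-σ}_{2,∞}`. -/
def WeakACond (n : ℕ) (g : EuclideanSpace ℝ (Fin n) → ℂ) (σ : ℝ) : Prop :=
  ∃ c C : ℝ, 0 < c ∧ 0 < C ∧ ∃ jk : ℕ → ℤ,
    Filter.Tendsto jk Filter.atTop Filter.atBot ∧
    (∃ M : ℕ, ∀ k : ℕ, |jk k - jk (k + 1)| ≤ M) ∧
    (∀ j : ℤ, ajBlock n g j ≤ ENNReal.ofReal (C * (2 : ℝ) ^ (σ * (j : ℝ)))) ∧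
    (∀ k : ℕ, ENNReal.ofReal (c * (2 : ℝ) ^ (σ * (jk k : ℝ))) ≤ ajBlock n g (jk k))

/-!
Write `r = 2σ` and normalize the dyadic blocks to `β_j = 4^{-rj} ∫_{A_j} |g|²`. On `A_j` we have
`4^j ≤ |ξ|² < 4^{j+1}`, so `t^r E(t)` is at most `Σ_j ψ(t 4^j) β_j` with `ψ(u) = u^r e^{-2u}` and
at least each single term `(t 4^j)^r e^{-8 t 4^j} β_j`. Since `Σ_i ψ(4^i)` converges and
`ψ(u) ≤ 4^r ψ(v)` for `v ≤ u ≤ 4v`, bounded `β` gives bounded `t^r E(t)`; lower bounds on `β` along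
a sequence with gaps at most `M` supply, for every large `t`, a block with `t 4^j ∈ [1, 4^{M+1}]`,
whence the liminf. Conversely, testing at `t = 4^{-j}` bounds `β_j`, and if `t^r E(t) ≥ ε` at
`t = 4^{-j₀}`, then in `Σ_i ψ(4^i) β_{j₀+i}` the tails outside a fixed finite window are small, so
some `β_{j₀+i}` in that window is bounded below.
-/

lemma exists_mem_Icc_of_tendsto_atBot {jk : ℕ → ℤ} (hjk : Tendsto jk atTop atBot) {M : ℕ}
    (hM : ∀ k, |jk k - jk (k + 1)| ≤ M) {a : ℤ} (ha : a ≤ jk 0) :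
    ∃ k, a ≤ jk k ∧ jk k ≤ a + M := by
  classical
  have hex : ∃ k, jk k < a := (hjk.eventually (eventually_lt_atBot a)).exists
  obtain ⟨k, hk⟩ : ∃ k, Nat.find hex = k + 1 :=
    Nat.exists_eq_add_one_of_ne_zero fun h0 => by
      have := Nat.find_spec hex
      rw [h0] at this
      omega
  have hlow : a ≤ jk k := not_lt.mp (Nat.find_min hex (by omega))
  have hnext : jk (k + 1) < a := hk ▸ Nat.find_spec hex
  have hjump := abs_le.mp (hM k)
  exact ⟨k, hlow, by omega⟩

lemma exists_seq_tendsto_atBot_of_eventually_exists_mem {P : ℤ → Prop} (s : Finset ℤ)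
    (h : ∀ᶠ j in atBot, ∃ i ∈ s, P (j + i)) :
    ∃ jk : ℕ → ℤ, Tendsto jk atTop atBot ∧ (∃ M : ℕ, ∀ k, |jk k - jk (k + 1)| ≤ M) ∧
      ∀ k, P (jk k) := by
  obtain ⟨J, hJ⟩ := eventually_atBot.mp h
  choose i hi hP using fun k : ℕ => hJ (J - k) (by omega)
  set N := s.sup Int.natAbs
  have hiN : ∀ k, |i k| ≤ N := fun k => by
    rw [Int.abs_eq_natAbs]
    exact_mod_cast Finset.le_sup (f := Int.natAbs) (hi k)
  refine ⟨fun k => J - k + i k, ?_, ⟨2 * N + 1, fun k => ?_⟩, hP⟩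
  · refine tendsto_atTop_atBot.mpr fun b => ⟨(J + N - b).toNat, fun k hk => ?_⟩
    have := abs_le.mp (hiN k)
    omega
  · have h₁ := abs_le.mp (hiN k)
    have h₂ := abs_le.mp (hiN (k + 1))
    rw [abs_le]
    push_cast
    constructor <;> omega

lemma exists_finset_exists_le_of_le_tsum_mul {ι : Type*} {w : ι → ℝ≥0∞} (hw : ∑' i, w i ≠ ∞)
    {C ε : ℝ≥0∞} (hC : C ≠ ∞) (hε : ε ≠ 0) :
    ∃ s : Finset ι, ∃ c : ℝ, 0 < c ∧ ∀ β : ι → ℝ≥0∞, (∀ i, β i ≤ C) →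
      ε ≤ ∑' i, w i * β i → ∃ i ∈ s, ENNReal.ofReal c ≤ β i := by
  have hε2 : ε / 2 ≠ 0 := ENNReal.div_ne_zero.mpr ⟨hε, ENNReal.ofNat_ne_top⟩
  obtain ⟨s, hs⟩ : ∃ s : Finset ι, C * ∑' i : {x // x ∉ s}, w i < ε / 2 := by
    have := ENNReal.Tendsto.const_mul (ENNReal.tendsto_tsum_compl_atTop_zero hw) (Or.inr hC)
    rw [mul_zero] at this
    exact (this.eventually (gt_mem_nhds (pos_iff_ne_zero.mpr hε2))).exists
  obtain ⟨c, hc, hcw⟩ := ENNReal.exists_nnreal_pos_mul_lt hw hε2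
  refine ⟨s, c, hc, fun β hβ hεβ => ?_⟩
  by_contra! hsmall
  simp only [ENNReal.ofReal_coe_nnreal] at hsmall
  have hin : ∑ i ∈ s, w i * β i ≤ c * ∑' i, w i :=
    calc ∑ i ∈ s, w i * β i ≤ ∑ i ∈ s, c * w i := Finset.sum_le_sum fun i hi => by
          rw [mul_comm]; gcongr; exact (hsmall i hi).le
      _ ≤ c * ∑' i, w i := by rw [← Finset.mul_sum]; gcongr; exact ENNReal.sum_le_tsum s
  have hout : ∑' i : ((s : Set ι)ᶜ : Set ι), w i * β i ≤ C * ∑' i : {x // x ∉ s}, w i := by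
    rw [← ENNReal.tsum_mul_left]
    exact ENNReal.tsum_le_tsum fun i => by rw [mul_comm]; gcongr; exact hβ i
  refine lt_irrefl ε ?_
  calc ε ≤ ∑' i, w i * β i := hεβ
    _ = ∑ i ∈ s, w i * β i + ∑' i : ((s : Set ι)ᶜ : Set ι), w i * β i :=
        (ENNReal.sum_add_tsum_compl s _).symm
    _ < ε / 2 + ε / 2 := ENNReal.add_lt_add (hin.trans_lt hcw) (hout.trans_lt hs)
    _ = ε := ENNReal.add_halves ε

section Blocks

variable {n : ℕ} (g : EuclideanSpace ℝ (Fin n) → ℂ)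

def dyadicAnnulus (n : ℕ) (j : ℤ) : Set (EuclideanSpace ℝ (Fin n)) :=
  {ξ | (2 : ℝ) ^ (j : ℝ) ≤ ‖ξ‖ ∧ ‖ξ‖ < (2 : ℝ) ^ ((j : ℝ) + 1)}

def blockSq (n : ℕ) (g : EuclideanSpace ℝ (Fin n) → ℂ) (j : ℤ) : ℝ≥0∞ :=
  ∫⁻ ξ in dyadicAnnulus n j, ENNReal.ofReal (‖g ξ‖ ^ 2)

lemma ajBlock_eq_blockSq_rpow (j : ℤ) : ajBlock n g j = blockSq n g j ^ (1 / 2 : ℝ) := rfl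

lemma mem_dyadicAnnulus_iff {j : ℤ} {ξ : EuclideanSpace ℝ (Fin n)} :
    ξ ∈ dyadicAnnulus n j ↔ (2 : ℝ) ^ j ≤ ‖ξ‖ ∧ ‖ξ‖ < (2 : ℝ) ^ (j + 1) := by
  show _ ∧ _ ↔ _
  rw [← Real.rpow_intCast, ← Real.rpow_intCast, Int.cast_add, Int.cast_one]

lemma measurableSet_dyadicAnnulus (j : ℤ) : MeasurableSet (dyadicAnnulus n j) :=
  measurableSet_Ico.preimage measurable_norm

lemma iUnion_dyadicAnnulus : ⋃ j, dyadicAnnulus n j = {0}ᶜ := by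
  ext ξ
  simp only [Set.mem_iUnion, mem_dyadicAnnulus_iff, Set.mem_compl_singleton_iff]
  constructor
  · rintro ⟨j, hj, -⟩ rfl
    rw [norm_zero] at hj
    exact (zpow_pos two_pos j).not_ge hj
  · intro hξ
    have h := Int.zpow_log_le_self (R := ℝ) (b := 2) one_lt_two (norm_pos_iff.mpr hξ)
    have h' := Int.lt_zpow_succ_log_self (R := ℝ) (b := 2) one_lt_two ‖ξ‖
    push_cast at h h'
    exact ⟨_, h, h'⟩

lemma sq_norm_mem_Ico_of_mem_dyadicAnnulus {j : ℤ} {ξ : EuclideanSpace ℝ (Fin n)}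
    (hξ : ξ ∈ dyadicAnnulus n j) : (4 : ℝ) ^ j ≤ ‖ξ‖ ^ 2 ∧ ‖ξ‖ ^ 2 < 4 * (4 : ℝ) ^ j := by
  obtain ⟨h₁, h₂⟩ := mem_dyadicAnnulus_iff.mp hξ
  have h4 : (4 : ℝ) ^ j = ((2 : ℝ) ^ j) ^ 2 := by
    rw [sq, ← mul_zpow]; norm_num
  rw [zpow_add_one₀ two_ne_zero] at h₂
  refine ⟨h4 ▸ pow_le_pow_left₀ (zpow_pos two_pos j).le h₁ 2, ?_⟩
  rw [h4]
  nlinarith [norm_nonneg ξ]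

lemma Ealpha_one_eq (t : ℝ) : Ealpha n g 1 t =
    ∫⁻ ξ, ENNReal.ofReal (Real.exp (-(2 * t) * ‖ξ‖ ^ 2) * ‖g ξ‖ ^ 2) := by
  simp only [Ealpha, mul_one]
  norm_cast

lemma ofReal_exp_mul_blockSq_le_Ealpha {t : ℝ} (ht : 0 ≤ t) (j : ℤ) :
    ENNReal.ofReal (Real.exp (-8 * (t * (4 : ℝ) ^ j))) * blockSq n g j ≤ Ealpha n g 1 t := by
  rw [Ealpha_one_eq, blockSq, ← lintegral_const_mul' _ _ ENNReal.ofReal_ne_top]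
  refine (setLIntegral_mono' (measurableSet_dyadicAnnulus j) fun ξ hξ => ?_).trans
    (setLIntegral_le_lintegral _ _)
  rw [← ENNReal.ofReal_mul (Real.exp_nonneg _)]
  refine ENNReal.ofReal_le_ofReal
    (mul_le_mul_of_nonneg_right (Real.exp_le_exp.mpr ?_) (sq_nonneg _))
  nlinarith [(sq_norm_mem_Ico_of_mem_dyadicAnnulus hξ).2]

lemma Ealpha_le_tsum_ofReal_exp_mul_blockSq (hn : 1 ≤ n) {t : ℝ} (ht : 0 ≤ t) :
    Ealpha n g 1 t ≤
      ∑' j : ℤ, ENNReal.ofReal (Real.exp (-2 * (t * (4 : ℝ) ^ j))) * blockSq n g j := by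
  have : Nonempty (Fin n) := ⟨⟨0, hn⟩⟩
  have hfull : (⋃ j, dyadicAnnulus n j) =ᵐ[volume] (Set.univ : Set (EuclideanSpace ℝ (Fin n))) := by
    rw [ae_eq_univ, iUnion_dyadicAnnulus, compl_compl]
    exact measure_singleton 0
  rw [Ealpha_one_eq, ← setLIntegral_univ, ← setLIntegral_congr hfull]
  refine (lintegral_iUnion_le _ _).trans (ENNReal.tsum_le_tsum fun j => ?_)
  rw [blockSq, ← lintegral_const_mul' _ _ ENNReal.ofReal_ne_top]
  refine setLIntegral_mono' (measurableSet_dyadicAnnulus j) fun ξ hξ => ?_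
  rw [← ENNReal.ofReal_mul (Real.exp_nonneg _)]
  refine ENNReal.ofReal_le_ofReal
    (mul_le_mul_of_nonneg_right (Real.exp_le_exp.mpr ?_) (sq_nonneg _))
  nlinarith [(sq_norm_mem_Ico_of_mem_dyadicAnnulus hξ).1]

end Blocks

section Normalized

variable {n : ℕ} (g : EuclideanSpace ℝ (Fin n) → ℂ)

def normBlock (n : ℕ) (g : EuclideanSpace ℝ (Fin n) → ℂ) (r : ℝ) (j : ℤ) : ℝ≥0∞ :=
  blockSq n g j / ENNReal.ofReal (((4 : ℝ) ^ j) ^ r)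

def heatWeight (r u : ℝ) : ℝ := u ^ r * Real.exp (-2 * u)

lemma ofReal_four_zpow_rpow_ne_zero (r : ℝ) (j : ℤ) : ENNReal.ofReal (((4 : ℝ) ^ j) ^ r) ≠ 0 :=
  (ENNReal.ofReal_pos.mpr (Real.rpow_pos_of_pos (zpow_pos four_pos j) r)).ne'

lemma two_rpow_mul_sq (s : ℝ) (j : ℤ) : ((2 : ℝ) ^ (s * j)) ^ 2 = ((4 : ℝ) ^ j) ^ s := by
  rw [mul_comm, Real.rpow_mul zero_le_two, Real.rpow_intCast,
    Real.rpow_pow_comm (zpow_pos two_pos j).le, sq, ← mul_zpow]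
  norm_num

lemma ajBlock_le_ofReal_iff {s C : ℝ} (hC : 0 ≤ C) (j : ℤ) :
    ajBlock n g j ≤ ENNReal.ofReal (C * (2 : ℝ) ^ (s * j)) ↔
      normBlock n g s j ≤ ENNReal.ofReal (C ^ 2) := by
  rw [ajBlock_eq_blockSq_rpow, one_div, ENNReal.rpow_inv_le_iff two_pos,
    ENNReal.ofReal_rpow_of_nonneg (by positivity) zero_le_two, Real.rpow_two, mul_pow,
    two_rpow_mul_sq, ENNReal.ofReal_mul (sq_nonneg C), normBlock,
    ENNReal.div_le_iff (ofReal_four_zpow_rpow_ne_zero s j) ENNReal.ofReal_ne_top]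

lemma ofReal_le_ajBlock_iff {s c : ℝ} (hc : 0 ≤ c) (j : ℤ) :
    ENNReal.ofReal (c * (2 : ℝ) ^ (s * j)) ≤ ajBlock n g j ↔
      ENNReal.ofReal (c ^ 2) ≤ normBlock n g s j := by
  rw [ajBlock_eq_blockSq_rpow, one_div, ENNReal.le_rpow_inv_iff two_pos,
    ENNReal.ofReal_rpow_of_nonneg (by positivity) zero_le_two, Real.rpow_two, mul_pow,
    two_rpow_mul_sq, ENNReal.ofReal_mul (sq_nonneg c), normBlock,
    ENNReal.le_div_iff_mul_le (Or.inl (ofReal_four_zpow_rpow_ne_zero s j))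
      (Or.inl ENNReal.ofReal_ne_top)]

lemma ofReal_rpow_mul_mul_blockSq (r : ℝ) {t : ℝ} (a : ℝ) (ht : 0 ≤ t) (j : ℤ) :
    ENNReal.ofReal (t ^ r) * (ENNReal.ofReal a * blockSq n g j) =
      ENNReal.ofReal ((t * (4 : ℝ) ^ j) ^ r * a) * normBlock n g r j := by
  have h4 : 0 ≤ ((4 : ℝ) ^ j) ^ r := Real.rpow_nonneg (zpow_pos four_pos j).le r
  conv_lhs => rw [← ENNReal.mul_div_cancel (ofReal_four_zpow_rpow_ne_zero r j)
    ENNReal.ofReal_ne_top (b := blockSq n g j)]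
  rw [normBlock, Real.mul_rpow ht (zpow_pos four_pos j).le,
    ENNReal.ofReal_mul (mul_nonneg (Real.rpow_nonneg ht r) h4),
    ENNReal.ofReal_mul (Real.rpow_nonneg ht r)]
  ring

lemma ofReal_mul_normBlock_le_rpow_mul_Ealpha (r : ℝ) {t : ℝ} (ht : 0 ≤ t) (j : ℤ) :
    ENNReal.ofReal ((t * (4 : ℝ) ^ j) ^ r * Real.exp (-8 * (t * (4 : ℝ) ^ j))) *
      normBlock n g r j ≤ ENNReal.ofReal (t ^ r) * Ealpha n g 1 t := by
  rw [← ofReal_rpow_mul_mul_blockSq g r _ ht]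
  gcongr
  exact ofReal_exp_mul_blockSq_le_Ealpha g ht j

lemma rpow_mul_Ealpha_le_tsum (hn : 1 ≤ n) (r : ℝ) {t : ℝ} (ht : 0 ≤ t) :
    ENNReal.ofReal (t ^ r) * Ealpha n g 1 t ≤
      ∑' j : ℤ, ENNReal.ofReal (heatWeight r (t * (4 : ℝ) ^ j)) * normBlock n g r j :=
  calc ENNReal.ofReal (t ^ r) * Ealpha n g 1 t
      ≤ ENNReal.ofReal (t ^ r) *
          ∑' j : ℤ, ENNReal.ofReal (Real.exp (-2 * (t * (4 : ℝ) ^ j))) * blockSq n g j := by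
        gcongr
        exact Ealpha_le_tsum_ofReal_exp_mul_blockSq g hn ht
    _ = ∑' j : ℤ, ENNReal.ofReal (heatWeight r (t * (4 : ℝ) ^ j)) * normBlock n g r j := by
        rw [← ENNReal.tsum_mul_left]
        exact tsum_congr fun j => ofReal_rpow_mul_mul_blockSq g r _ ht j

end Normalized

lemma heatWeight_nonneg (r : ℝ) {u : ℝ} (hu : 0 ≤ u) : 0 ≤ heatWeight r u :=
  mul_nonneg (Real.rpow_nonneg hu r) (Real.exp_nonneg _)

lemma heatWeight_le_of_le_of_le {r u v : ℝ} (hr : 0 ≤ r) (hv : 0 ≤ v) (hvu : v ≤ u)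
    (hu : u ≤ 4 * v) : heatWeight r u ≤ 4 ^ r * heatWeight r v := by
  have hpow : u ^ r ≤ 4 ^ r * v ^ r := by
    rw [← Real.mul_rpow zero_le_four hv]
    exact Real.rpow_le_rpow (hv.trans hvu) hu hr
  have hexp : Real.exp (-2 * u) ≤ Real.exp (-2 * v) := Real.exp_le_exp.mpr (by linarith)
  rw [heatWeight, heatWeight, ← mul_assoc]
  exact mul_le_mul hpow hexp (Real.exp_nonneg _) (by positivity)

lemma summable_heatWeight_four_zpow {r : ℝ} (hr : 0 < r) :
    Summable fun i : ℤ => heatWeight r ((4 : ℝ) ^ i) := by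
  refine Summable.of_nat_of_neg ?_ ?_
  · -- `u ^ r * exp (-u) → 0`, so eventually `heatWeight r u ≤ exp (-u)`, and `k ≤ 4 ^ k`.
    have hsmall : ∀ᶠ k : ℕ in atTop, ((4 : ℝ) ^ k) ^ r * Real.exp (-1 * (4 : ℝ) ^ k) ≤ 1 :=
      ((tendsto_rpow_mul_exp_neg_mul_atTop_nhds_zero r 1 one_pos).comp
        (tendsto_pow_atTop_atTop_of_one_lt (by norm_num : (1 : ℝ) < 4))).eventually
          (eventually_le_nhds zero_lt_one)
    refine Summable.of_norm_bounded_eventually_nat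
      (Real.summable_exp_neg_nat) (hsmall.mono fun k hk => ?_)
    have hk4 : (k : ℝ) ≤ 4 ^ k := by exact_mod_cast (Nat.lt_pow_self (by norm_num)).le
    rw [zpow_natCast, Real.norm_of_nonneg (heatWeight_nonneg r (by positivity)), heatWeight,
      show -2 * (4 : ℝ) ^ k = -1 * 4 ^ k + -(4 : ℝ) ^ k by ring, Real.exp_add, ← mul_assoc]
    calc _ ≤ 1 * Real.exp (-(4 : ℝ) ^ k) := by gcongr
      _ ≤ Real.exp (-k) := by rw [one_mul]; exact Real.exp_le_exp.mpr (neg_le_neg hk4)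
  · have hq : (4 : ℝ) ^ (-r) < 1 := Real.rpow_lt_one_of_one_lt_of_neg (by norm_num) (by linarith)
    refine Summable.of_nonneg_of_le (fun k => heatWeight_nonneg r (by positivity)) (fun k => ?_)
      (summable_geometric_of_lt_one (by positivity) hq)
    have hexp : Real.exp (-2 * (4 : ℝ) ^ (-(k : ℤ))) ≤ 1 :=
      Real.exp_le_one_iff.mpr (by have : (0 : ℝ) < 4 ^ (-(k : ℤ)) := (by positivity); linarith)
    calc heatWeight r ((4 : ℝ) ^ (-(k : ℤ))) ≤ ((4 : ℝ) ^ (-(k : ℤ))) ^ r :=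
          mul_le_of_le_one_right (Real.rpow_nonneg (by positivity) r) hexp
      _ = ((4 : ℝ) ^ (-r)) ^ k := by
          rw [zpow_neg, zpow_natCast, Real.inv_rpow (by positivity), ← Real.rpow_natCast_mul
            zero_le_four, Real.rpow_neg zero_le_four, inv_pow, ← Real.rpow_mul_natCast
            zero_le_four, mul_comm]

lemma tsum_ofReal_heatWeight_ne_top {r : ℝ} (hr : 0 < r) :
    ∑' i : ℤ, ENNReal.ofReal (heatWeight r ((4 : ℝ) ^ i)) ≠ ∞ := by
  rw [← ENNReal.ofReal_tsum_of_nonneg (fun i => heatWeight_nonneg r (by positivity))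
    (summable_heatWeight_four_zpow hr)]
  exact ENNReal.ofReal_ne_top

lemma tsum_ofReal_heatWeight_le {r t : ℝ} (hr : 0 ≤ r) (ht : 0 < t) :
    ∑' j : ℤ, ENNReal.ofReal (heatWeight r (t * (4 : ℝ) ^ j)) ≤
      ENNReal.ofReal (4 ^ r) * ∑' i : ℤ, ENNReal.ofReal (heatWeight r ((4 : ℝ) ^ i)) := by
  set m := Int.log 4 t
  have hm : (4 : ℝ) ^ m ≤ t := by exact_mod_cast Int.zpow_log_le_self (by norm_num) ht
  have hm' : t < 4 * (4 : ℝ) ^ m := by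
    have := Int.lt_zpow_succ_log_self (R := ℝ) (b := 4) (by norm_num) t
    rwa [Nat.cast_ofNat, zpow_add_one₀ four_ne_zero, mul_comm] at this
  calc ∑' j : ℤ, ENNReal.ofReal (heatWeight r (t * (4 : ℝ) ^ j))
      ≤ ∑' j : ℤ, ENNReal.ofReal (4 ^ r) * ENNReal.ofReal (heatWeight r ((4 : ℝ) ^ (m + j))) := by
        refine ENNReal.tsum_le_tsum fun j => ?_
        have hj : (0 : ℝ) < 4 ^ j := by positivity
        rw [← ENNReal.ofReal_mul (by positivity)]
        refine ENNReal.ofReal_le_ofReal (heatWeight_le_of_le_of_le hr (by positivity) ?_ ?_)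
        all_goals
          rw [zpow_add₀ four_ne_zero]
          nlinarith
    _ = ENNReal.ofReal (4 ^ r) * ∑' i : ℤ, ENNReal.ofReal (heatWeight r ((4 : ℝ) ^ i)) := by
        rw [ENNReal.tsum_mul_left]
        exact congrArg _ ((Equiv.addLeft m).tsum_eq fun i => ENNReal.ofReal (heatWeight r (4 ^ i)))

section Characterization

variable {n : ℕ} (g : EuclideanSpace ℝ (Fin n) → ℂ)

lemma weakACond_iff_normBlock (s : ℝ) :
    WeakACond n g s ↔ ∃ c C : ℝ, 0 < c ∧ 0 < C ∧ ∃ jk : ℕ → ℤ, Tendsto jk atTop atBot ∧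
      (∃ M : ℕ, ∀ k, |jk k - jk (k + 1)| ≤ M) ∧ (∀ j, normBlock n g s j ≤ ENNReal.ofReal C) ∧
      ∀ k, ENNReal.ofReal c ≤ normBlock n g s (jk k) := by
  constructor
  · rintro ⟨c, C, hc, hC, jk, hjk, hM, hup, hlow⟩
    exact ⟨c ^ 2, C ^ 2, by positivity, by positivity, jk, hjk, hM,
      fun j => (ajBlock_le_ofReal_iff g hC.le j).mp (hup j),
      fun k => (ofReal_le_ajBlock_iff g hc.le _).mp (hlow k)⟩
  · rintro ⟨c, C, hc, hC, jk, hjk, hM, hup, hlow⟩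
    refine ⟨√c, √C, Real.sqrt_pos.mpr hc, Real.sqrt_pos.mpr hC, jk, hjk, hM, fun j => ?_,
      fun k => ?_⟩
    · rw [ajBlock_le_ofReal_iff g (Real.sqrt_nonneg C), Real.sq_sqrt hC.le]
      exact hup j
    · rw [ofReal_le_ajBlock_iff g (Real.sqrt_nonneg c), Real.sq_sqrt hc.le]
      exact hlow k

lemma exists_rpow_mul_Ealpha_le_of_normBlock_le (hn : 1 ≤ n) {r C : ℝ} (hr : 0 < r)
    (hC : ∀ j, normBlock n g r j ≤ ENNReal.ofReal C) :
    ∃ K : ℝ, ∀ t : ℝ, 0 < t → ENNReal.ofReal (t ^ r) * Ealpha n g 1 t ≤ ENNReal.ofReal K := by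
  set S := ∑' i : ℤ, ENNReal.ofReal (heatWeight r ((4 : ℝ) ^ i))
  have hfin : ENNReal.ofReal C * (ENNReal.ofReal (4 ^ r) * S) ≠ ∞ :=
    ENNReal.mul_ne_top ENNReal.ofReal_ne_top
      (ENNReal.mul_ne_top ENNReal.ofReal_ne_top (tsum_ofReal_heatWeight_ne_top hr))
  refine ⟨(ENNReal.ofReal C * (ENNReal.ofReal (4 ^ r) * S)).toReal, fun t ht => ?_⟩
  rw [ENNReal.ofReal_toReal hfin]
  calc ENNReal.ofReal (t ^ r) * Ealpha n g 1 t
      ≤ ∑' j : ℤ, ENNReal.ofReal (heatWeight r (t * (4 : ℝ) ^ j)) * normBlock n g r j :=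
        rpow_mul_Ealpha_le_tsum g hn r ht.le
    _ ≤ ∑' j : ℤ, ENNReal.ofReal (heatWeight r (t * (4 : ℝ) ^ j)) * ENNReal.ofReal C :=
        ENNReal.tsum_le_tsum fun j => by gcongr; exact hC j
    _ = ENNReal.ofReal C * ∑' j : ℤ, ENNReal.ofReal (heatWeight r (t * (4 : ℝ) ^ j)) := by
        rw [ENNReal.tsum_mul_right, mul_comm]
    _ ≤ ENNReal.ofReal C * (ENNReal.ofReal (4 ^ r) * S) := by
        gcongr
        exact tsum_ofReal_heatWeight_le hr.le ht

lemma liminf_rpow_mul_Ealpha_pos_of_le_normBlock {r c : ℝ} (hr : 0 ≤ r) (hc : 0 < c)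
    {jk : ℕ → ℤ} (hjk : Tendsto jk atTop atBot) {M : ℕ} (hM : ∀ k, |jk k - jk (k + 1)| ≤ M)
    (hlow : ∀ k, ENNReal.ofReal c ≤ normBlock n g r (jk k)) :
    0 < liminf (fun t : ℝ => ENNReal.ofReal (t ^ r) * Ealpha n g 1 t) atTop := by
  set U : ℝ := 4 ^ ((M : ℤ) + 1)
  refine (ENNReal.ofReal_pos.mpr (by positivity : 0 < Real.exp (-8 * U) * c)).trans_le
    (le_liminf_of_le (by isBoundedDefault) ?_)
  filter_upwards [eventually_ge_atTop ((4 : ℝ) ^ (-jk 0))] with t ht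
  have htpos : 0 < t := lt_of_lt_of_le (by positivity) ht
  set m := Int.log 4 t
  have hm : (4 : ℝ) ^ m ≤ t := by exact_mod_cast Int.zpow_log_le_self (by norm_num) htpos
  have hm' : t < (4 : ℝ) ^ (m + 1) := by
    exact_mod_cast Int.lt_zpow_succ_log_self (R := ℝ) (b := 4) (by norm_num) t
  have ha : -m ≤ jk 0 := by
    have := (Int.zpow_le_iff_le_log (R := ℝ) (b := 4) (by norm_num) htpos).mp
      (by exact_mod_cast ht)
    omega
  obtain ⟨k, hk₁, hk₂⟩ := exists_mem_Icc_of_tendsto_atBot hjk hM ha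
  set u := t * (4 : ℝ) ^ jk k
  have hj : (0 : ℝ) < 4 ^ jk k := by positivity
  have hu₁ : 1 ≤ u :=
    calc (1 : ℝ) ≤ 4 ^ (m + jk k) := one_le_zpow₀ (by norm_num) (by omega)
      _ ≤ u := by rw [zpow_add₀ four_ne_zero]; exact mul_le_mul_of_nonneg_right hm hj.le
  have hu₂ : u ≤ U :=
    calc u ≤ 4 ^ (m + 1) * 4 ^ jk k := mul_le_mul_of_nonneg_right hm'.le hj.le
      _ = 4 ^ (m + 1 + jk k) := (zpow_add₀ four_ne_zero _ _).symm
      _ ≤ U := zpow_le_zpow_right₀ (by norm_num) (by omega)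
  calc ENNReal.ofReal (Real.exp (-8 * U) * c)
      = ENNReal.ofReal (Real.exp (-8 * U)) * ENNReal.ofReal c :=
        ENNReal.ofReal_mul (Real.exp_nonneg _)
    _ ≤ ENNReal.ofReal (u ^ r * Real.exp (-8 * u)) * normBlock n g r (jk k) := by
        gcongr
        · exact (Real.exp_le_exp.mpr (by linarith)).trans
            (le_mul_of_one_le_left (Real.exp_nonneg _) (Real.one_le_rpow hu₁ hr))
        · exact hlow k
    _ ≤ ENNReal.ofReal (t ^ r) * Ealpha n g 1 t :=
        ofReal_mul_normBlock_le_rpow_mul_Ealpha g r htpos.le (jk k)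

lemma exists_normBlock_le_of_rpow_mul_Ealpha_le {r K : ℝ}
    (hK : ∀ t : ℝ, 0 < t → ENNReal.ofReal (t ^ r) * Ealpha n g 1 t ≤ ENNReal.ofReal K) :
    ∃ C : ℝ, 0 < C ∧ ∀ j, normBlock n g r j ≤ ENNReal.ofReal C := by
  refine ⟨Real.exp 8 * max K 1, by positivity, fun j => ?_⟩
  have hprobe := (ofReal_mul_normBlock_le_rpow_mul_Ealpha g r (by positivity) j).trans
    (hK ((4 : ℝ) ^ j)⁻¹ (by positivity))
  rw [inv_mul_cancel₀ (by positivity), Real.one_rpow, one_mul, mul_one] at hprobe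
  calc normBlock n g r j
      = ENNReal.ofReal (Real.exp 8) * (ENNReal.ofReal (Real.exp (-8)) * normBlock n g r j) := by
        rw [← mul_assoc, ← ENNReal.ofReal_mul (Real.exp_nonneg _), ← Real.exp_add]
        norm_num
    _ ≤ ENNReal.ofReal (Real.exp 8) * ENNReal.ofReal K := by gcongr
    _ ≤ ENNReal.ofReal (Real.exp 8 * max K 1) := by
        rw [← ENNReal.ofReal_mul (Real.exp_nonneg _)]
        gcongr
        exact le_max_left K 1

lemma tendsto_four_zpow_neg_atBot_atTop : Tendsto (fun j : ℤ => (4 : ℝ) ^ (-j)) atBot atTop :=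
  tendsto_atBot_atTop.mpr fun b => ⟨-(Int.log 4 b + 1), fun j hj =>
    (Int.lt_zpow_succ_log_self (R := ℝ) (b := 4) (by norm_num) b).le.trans
      (by exact_mod_cast zpow_le_zpow_right₀ (by norm_num : (1 : ℝ) ≤ 4) (by omega))⟩

lemma exists_seq_le_normBlock_of_liminf_pos (hn : 1 ≤ n) {r C : ℝ} (hr : 0 < r)
    (hC : ∀ j, normBlock n g r j ≤ ENNReal.ofReal C)
    (hpos : 0 < liminf (fun t : ℝ => ENNReal.ofReal (t ^ r) * Ealpha n g 1 t) atTop) :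
    ∃ c : ℝ, 0 < c ∧ ∃ jk : ℕ → ℤ, Tendsto jk atTop atBot ∧
      (∃ M : ℕ, ∀ k, |jk k - jk (k + 1)| ≤ M) ∧ ∀ k, ENNReal.ofReal c ≤ normBlock n g r (jk k) := by
  obtain ⟨ε, hε₀, hε⟩ := exists_between hpos
  obtain ⟨s, c, hc, hs⟩ := exists_finset_exists_le_of_le_tsum_mul
    (tsum_ofReal_heatWeight_ne_top hr) (ENNReal.ofReal_ne_top (r := C)) hε₀.ne'
  have hwindow : ∀ᶠ j₀ in atBot, ∃ i ∈ s, ENNReal.ofReal c ≤ normBlock n g r (j₀ + i) := by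
    filter_upwards [tendsto_four_zpow_neg_atBot_atTop.eventually
      (eventually_lt_of_lt_liminf hε)] with j₀ hj₀
    refine hs (fun i => normBlock n g r (j₀ + i)) (fun i => hC _) (hj₀.le.trans ?_)
    refine (rpow_mul_Ealpha_le_tsum g hn r (by positivity)).trans_eq ?_
    rw [← (Equiv.addLeft j₀).tsum_eq]
    refine tsum_congr fun i => ?_
    rw [Equiv.coe_addLeft, zpow_add₀ four_ne_zero, ← mul_assoc, zpow_neg,
      inv_mul_cancel₀ (by positivity), one_mul]
  obtain ⟨jk, hjk, hM, hlow⟩ := exists_seq_tendsto_atBot_of_eventually_exists_mem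
    (P := fun j => ENNReal.ofReal c ≤ normBlock n g r j) s hwindow
  exact ⟨c, hc, jk, hjk, hM, hlow⟩

end Characterization

theorem stmt7_general (n : ℕ) (hn : 1 ≤ n) (σ : ℝ) (hσ : 0 < σ)
    (g : EuclideanSpace ℝ (Fin n) → ℂ) :
    WeakACond n g (2 * σ) ↔
    ((∃ K : ℝ, ∀ t : ℝ, 0 < t →
        ENNReal.ofReal (t ^ (2 * σ)) * Ealpha n g 1 t ≤ ENNReal.ofReal K) ∧
      0 < liminf (fun t : ℝ => ENNReal.ofReal (t ^ (2 * σ)) * Ealpha n g 1 t) atTop) := by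
  have hr : 0 < 2 * σ := by positivity
  rw [weakACond_iff_normBlock]
  constructor
  · rintro ⟨c, C, hc, -, jk, hjk, ⟨M, hM⟩, hup, hlow⟩
    exact ⟨exists_rpow_mul_Ealpha_le_of_normBlock_le g hn hr hup,
      liminf_rpow_mul_Ealpha_pos_of_le_normBlock g hr.le hc hjk hM hlow⟩
  · rintro ⟨⟨K, hK⟩, hpos⟩
    obtain ⟨C, hC, hup⟩ := exists_normBlock_le_of_rpow_mul_Ealpha_le g hK
    obtain ⟨c, hc, jk, hjk, hM, hlow⟩ := exists_seq_le_normBlock_of_liminf_pos g hn hr hup hpos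
    exact ⟨c, C, hc, hC, jk, hjk, hM, hup, hlow⟩

theorem stmt7 (n : ℕ) (hn : 1 ≤ n) (σ : ℝ) (hσ : 0 < σ)
    (g : EuclideanSpace ℝ (Fin n) → ℂ) (hg_meas : Measurable g) :
    WeakACond n g (2 * σ) ↔
    ((∃ K : ℝ, ∀ t : ℝ, 0 < t →
        ENNReal.ofReal (t ^ (2 * σ)) * Ealpha n g 1 t ≤ ENNReal.ofReal K) ∧
      0 < liminf (fun t : ℝ => ENNReal.ofReal (t ^ (2 * σ)) * Ealpha n g 1 t) atTop) :=
  stmt7_general n hn σ hσ g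
end
end
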